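/- arXiv:1404.4960 — 5 statements merged into one kernel-verified Lean document; each statement's English description precedes it below -/
import Mathlib

section
/- Under assumptions (A.1) and (A.2), the Markov chain with transition matrix Q on the state space S is irreducible: for any two states s, s' ∈ S there exists an integer d ≥ 1 such that the d-step transition probability (Q^d)(s, s') is strictly positive. -/
/-- The state space `S = {(k,m,n) ∈ H × B × B : M_k(m,n) > 0}` of the
higher-dimensional Markov chain `𝕄`. -/
abbrev ABPState {Bty Hty : Type} (M : Hty → Matrix Bty Bty ℝ) : Type :=
  {p : Hty × Bty × Bty // 0 < M p.1 p.2.1 p.2.2}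

/-- Entrywise nonnegativity is preserved by matrix powers. -/
lemma abp_pow_nonneg {n : Type} [Fintype n] [DecidableEq n] {A : Matrix n n ℝ}
    (hA : ∀ i j, 0 ≤ A i j) : ∀ d i j, 0 ≤ (A ^ d) i j := by
  intro d
  induction d with
  | zero =>
    intro i j
    rw [pow_zero, Matrix.one_apply]
    split <;> norm_num
  | succ d ih =>
    intro i j
    rw [pow_succ, Matrix.mul_apply]
    exact Finset.sum_nonneg fun x _ => mul_nonneg (ih i x) (hA x j)

/-- Extending a positive path by one positive step. -/
lemma abp_pow_step {n : Type} [Fintype n] [DecidableEq n] {A : Matrix n n ℝ}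
    (hA : ∀ i j, 0 ≤ A i j) {d : ℕ} {i j k : n}
    (h1 : 0 < (A ^ d) i j) (h2 : 0 < A j k) : 0 < (A ^ (d + 1)) i k := by
  rw [pow_succ, Matrix.mul_apply]
  refine Finset.sum_pos' (fun x _ => mul_nonneg (abp_pow_nonneg hA d i x) (hA x k)) ?_
  exact ⟨j, Finset.mem_univ j, mul_pos h1 h2⟩

/-- Splitting a positive entry of `A ^ (d+1)`. -/
lemma abp_pow_split {n : Type} [Fintype n] [DecidableEq n] {A : Matrix n n ℝ}
    (hA : ∀ i j, 0 ≤ A i j) {d : ℕ} {i k : n}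
    (h : 0 < (A ^ (d + 1)) i k) : ∃ j, 0 < (A ^ d) i j ∧ 0 < A j k := by
  rw [pow_succ, Matrix.mul_apply] at h
  by_contra hc
  push_neg at hc
  have hle : ∀ x ∈ Finset.univ, (A ^ d) i x * A x k ≤ 0 := by
    intro x _
    rcases lt_or_eq_of_le (abp_pow_nonneg hA d i x) with hx | hx
    · have hy : A x k ≤ 0 := hc x hx
      calc (A ^ d) i x * A x k ≤ (A ^ d) i x * 0 :=
            mul_le_mul_of_nonneg_left hy hx.le
        _ = 0 := mul_zero _
    · rw [← hx, zero_mul]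
  exact absurd h (not_lt.mpr (Finset.sum_nonpos hle))

/-- Under assumptions (A.1) and (A.2), the Markov chain with transition
matrix `Q` on the state space `S` is irreducible: any two states communicate. -/
theorem stmt_1
    {Bty Hty : Type} [Fintype Bty] [Fintype Hty] [Nonempty Bty] [Nonempty Hty]
    [DecidableEq Bty] [DecidableEq Hty]
    (w : Bty → Hty → ℝ) (hw0 : ∀ b k, 0 ≤ w b k) (hw1 : ∀ b, ∑ k, w b k = 1)
    (M : Hty → Matrix Bty Bty ℝ) (hM0 : ∀ k m n, 0 ≤ M k m n)
    (hM1 : ∀ k m, ∑ n, M k m n = 1)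
    -- (A.1) irreducibility of each M_k
    (hA1irr : ∀ (k : Hty) (m n : Bty), ∃ d : ℕ, 1 ≤ d ∧ 0 < (M k ^ d) m n)
    -- (A.1) aperiodicity of each M_k: gcd{d ≥ 1 : (M_k^d)(m,m) > 0} = 1,
    -- i.e. every common divisor of that set equals 1
    (hA1aper : ∀ (k : Hty) (m : Bty) (p : ℕ),
      (∀ d : ℕ, 1 ≤ d → 0 < (M k ^ d) m m → p ∣ d) → p = 1)
    -- (A.2)
    (hA2 : ∀ b k, 0 < w b k)
    -- the transition matrix Q on S
    (Q : Matrix (ABPState M) (ABPState M) ℝ)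
    (hQ : ∀ s s' : ABPState M, Q s s' =
      if s'.1.2.1 = s.1.2.2 then w s'.1.2.1 s'.1.1 * M s'.1.1 s'.1.2.1 s'.1.2.2 else 0) :
    ∀ s s' : ABPState M, ∃ d : ℕ, 1 ≤ d ∧ 0 < (Q ^ d) s s' := by
  -- Q has nonnegative entries
  have hQ0 : ∀ s s' : ABPState M, 0 ≤ Q s s' := by
    intro s s'
    rw [hQ]
    split
    · exact mul_nonneg (hw0 _ _) (hM0 _ _ _)
    · exact le_refl 0
  intro s s'
  -- fix a feedback symbol
  set k : Hty := s'.1.1 with hk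
  -- key lemma: if M k has a positive d-step path from b to m (d ≥ 1), then from any
  -- state with third coordinate b there is a positive d-step Q-path to some state
  -- with feedback k and third coordinate m.
  have key : ∀ d : ℕ, 1 ≤ d → ∀ b m : Bty, 0 < (M k ^ d) b m →
      ∀ t : ABPState M, t.1.2.2 = b →
      ∃ t' : ABPState M, t'.1.1 = k ∧ t'.1.2.2 = m ∧ 0 < (Q ^ d) t t' := by
    intro d
    induction d with
    | zero => intro h; omega
    | succ d ih =>
      intro _ b m hpos t ht
      rcases Nat.eq_zero_or_pos d with hd0 | hd1
      · -- one step
        subst hd0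
        rw [pow_one] at hpos ⊢
        refine ⟨⟨(k, b, m), hpos⟩, rfl, rfl, ?_⟩
        rw [hQ]
        simp only [ht]
        rw [if_true]
        exact mul_pos (hA2 _ _) hpos
      · obtain ⟨x, hx1, hx2⟩ := abp_pow_split (hM0 k) hpos
        obtain ⟨t₂, htk, htx, htQ⟩ := ih hd1 b x hx1 t ht
        refine ⟨⟨(k, x, m), hx2⟩, rfl, rfl, ?_⟩
        refine abp_pow_step hQ0 htQ ?_
        rw [hQ]
        simp only [htx]
        rw [if_true]
        exact mul_pos (hA2 _ _) hx2
  obtain ⟨d, hd1, hdpos⟩ := hA1irr k s.1.2.2 s'.1.2.1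
  obtain ⟨t, htk, htm, htQ⟩ := key d hd1 s.1.2.2 s'.1.2.1 hdpos s rfl
  refine ⟨d + 1, by omega, ?_⟩
  refine abp_pow_step hQ0 htQ ?_
  rw [hQ]
  rw [if_pos htm.symm]
  exact mul_pos (hA2 _ _) s'.2
end

section
/- Under assumptions (A.1) and (A.2), the Markov chain with transition matrix Q on the state space S is aperiodic: for every state s ∈ S, gcd{d ≥ 1 : (Q^d)(s, s) > 0} = 1. -/
lemma matpow_nonneg {ι : Type*} [Fintype ι] [DecidableEq ι] (A : Matrix ι ι ℝ)
    (h : ∀ i j, 0 ≤ A i j) : ∀ d i j, 0 ≤ (A ^ d) i j := by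
  intro d
  induction d with
  | zero =>
    intro i j
    rw [pow_zero, Matrix.one_apply]
    split <;> norm_num
  | succ d ih =>
    intro i j
    rw [pow_succ, Matrix.mul_apply]
    exact Finset.sum_nonneg fun l _ => mul_nonneg (ih i l) (h l j)

lemma matpow_add_pos {ι : Type*} [Fintype ι] [DecidableEq ι] (A : Matrix ι ι ℝ)
    (h : ∀ i j, 0 ≤ A i j) {m n : ℕ} {i j k : ι}
    (h1 : 0 < (A ^ m) i j) (h2 : 0 < (A ^ n) j k) : 0 < (A ^ (m + n)) i k := by
  rw [pow_add, Matrix.mul_apply]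
  exact Finset.sum_pos'
    (fun l _ => mul_nonneg (matpow_nonneg A h m i l) (matpow_nonneg A h n l k))
    ⟨j, Finset.mem_univ j, mul_pos h1 h2⟩

/-- Under assumptions (A.1) and (A.2), the Markov chain with transition
matrix `Q` on the state space `S` is aperiodic: for every state `s`,
gcd{d ≥ 1 : (Q^d)(s,s) > 0} = 1, i.e. every common divisor of that set equals 1. -/
theorem stmt_2
    {Bty Hty : Type} [Fintype Bty] [Fintype Hty] [Nonempty Bty] [Nonempty Hty]
    [DecidableEq Bty] [DecidableEq Hty]
    (w : Bty → Hty → ℝ) (hw0 : ∀ b k, 0 ≤ w b k) (hw1 : ∀ b, ∑ k, w b k = 1)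
    (M : Hty → Matrix Bty Bty ℝ) (hM0 : ∀ k m n, 0 ≤ M k m n)
    (hM1 : ∀ k m, ∑ n, M k m n = 1)
    -- (A.1) irreducibility of each M_k
    (hA1irr : ∀ (k : Hty) (m n : Bty), ∃ d : ℕ, 1 ≤ d ∧ 0 < (M k ^ d) m n)
    -- (A.1) aperiodicity of each M_k
    (hA1aper : ∀ (k : Hty) (m : Bty) (p : ℕ),
      (∀ d : ℕ, 1 ≤ d → 0 < (M k ^ d) m m → p ∣ d) → p = 1)
    -- (A.2)
    (hA2 : ∀ b k, 0 < w b k)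
    -- the transition matrix Q on S
    (Q : Matrix (ABPState M) (ABPState M) ℝ)
    (hQ : ∀ s s' : ABPState M, Q s s' =
      if s'.1.2.1 = s.1.2.2 then w s'.1.2.1 s'.1.1 * M s'.1.1 s'.1.2.1 s'.1.2.2 else 0) :
    ∀ (s : ABPState M) (p : ℕ),
      (∀ d : ℕ, 1 ≤ d → 0 < (Q ^ d) s s → p ∣ d) → p = 1 := by
  intro s p hp
  obtain ⟨⟨j, a, b⟩, hs⟩ := s
  set k0 : Hty := Classical.arbitrary Hty with hk0
  have hQnn : ∀ t t', 0 ≤ Q t t' := by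
    intro t t'
    rw [hQ]
    split
    · exact mul_nonneg (hw0 _ _) (hM0 _ _ _)
    · exact le_refl 0
  have claim : ∀ e (t : ABPState M), 0 < (M k0 ^ e) t.1.2.2 a →
      0 < (Q ^ (e + 1)) t ⟨(j, a, b), hs⟩ := by
    intro e
    induction e with
    | zero =>
      intro t ht
      rw [pow_zero, Matrix.one_apply] at ht
      have hta : t.1.2.2 = a := by
        by_contra hne
        rw [if_neg hne] at ht
        exact lt_irrefl 0 ht
      rw [pow_one, hQ]
      rw [if_pos hta.symm]
      exact mul_pos (hA2 a j) hs
    | succ e ih =>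
      intro t ht
      rw [pow_succ', Matrix.mul_apply] at ht
      obtain ⟨x, hx⟩ : ∃ x, 0 < M k0 t.1.2.2 x * (M k0 ^ e) x a := by
        by_contra hc
        push_neg at hc
        exact absurd ht (not_lt.mpr (Finset.sum_nonpos fun l _ => hc l))
      have hx1 : 0 < M k0 t.1.2.2 x ∧ 0 < (M k0 ^ e) x a := by
        rcases mul_pos_iff.mp hx with h | h
        · exact h
        · exact absurd h.1 (not_lt.mpr (hM0 _ _ _))
      set t' : ABPState M := ⟨(k0, t.1.2.2, x), hx1.1⟩ with ht'
      have hQtt' : 0 < (Q ^ 1) t t' := by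
        rw [pow_one, hQ, if_pos rfl]
        exact mul_pos (hA2 _ _) hx1.1
      have h2 : 0 < (Q ^ (e + 1)) t' ⟨(j, a, b), hs⟩ := ih t' hx1.2
      have h3 := matpow_add_pos Q hQnn hQtt' h2
      rwa [Nat.add_comm 1 (e + 1)] at h3
  obtain ⟨e0, he01, he0⟩ := hA1irr k0 b a
  have hpe0 : p ∣ e0 + 1 := hp (e0 + 1) (by omega) (claim e0 ⟨(j, a, b), hs⟩ he0)
  apply hA1aper k0 a p
  intro d hd hMd
  have hba : 0 < ((M k0) ^ (e0 + d)) b a := matpow_add_pos (M k0) (hM0 k0) he0 hMd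
  have hpd : p ∣ e0 + d + 1 := hp (e0 + d + 1) (by omega) (claim (e0 + d) ⟨(j, a, b), hs⟩ hba)
  have hsub := Nat.dvd_sub hpd hpe0
  have : e0 + d + 1 - (e0 + 1) = d := by omega
  rwa [this] at hsub
end

section
/- Under assumptions (A.1) and (A.2), the Markov chain with transition matrix Q on the finite state space S has a stationary distribution: there exists a unique probability vector π on S with Σ_{s∈S} π(s)·Q(s,s') = π(s') for all s' ∈ S, and moreover for every pair of states s, s' ∈ S the n-step transition probability (Q^n)(s, s') converges to π(s') as n → ∞. -/
open Filter Finset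


/-- Positive multiples stay in an additively closed set. -/
lemma mul_mem_addclosed (R : Set ℕ) (hadd : ∀ a ∈ R, ∀ b ∈ R, a + b ∈ R)
    {a : ℕ} (ha : a ∈ R) : ∀ k, 0 < k → k * a ∈ R := by
  intro k hk
  induction k with
  | zero => omega
  | succ k ih =>
    rcases Nat.eq_zero_or_pos k with hk0 | hk0
    · subst hk0; simpa using ha
    · have := hadd _ (ih hk0) _ ha
      simpa [Nat.succ_mul] using this

lemma combo_mem_addclosed (R : Set ℕ) (hadd : ∀ a ∈ R, ∀ b ∈ R, a + b ∈ R)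
    {a b : ℕ} (ha : a ∈ R) (hb : b ∈ R) (i j : ℕ) (hij : 0 < i + j) :
    i * a + j * b ∈ R := by
  rcases Nat.eq_zero_or_pos i with hi | hi
  · subst hi; simpa using mul_mem_addclosed R hadd hb j (by omega)
  rcases Nat.eq_zero_or_pos j with hj | hj
  · subst hj; simpa using mul_mem_addclosed R hadd ha i hi
  · exact hadd _ (mul_mem_addclosed R hadd ha i hi) _ (mul_mem_addclosed R hadd hb j hj)

/-- A nonempty additively-closed set of positive naturals with gcd 1 contains
all sufficiently large naturals. -/
lemma eventually_mem_of_addclosed_gcd_one (R : Set ℕ)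
    (hadd : ∀ a ∈ R, ∀ b ∈ R, a + b ∈ R)
    (hne : ∃ a, a ∈ R ∧ 0 < a)
    (hgcd : ∀ p : ℕ, (∀ d ∈ R, p ∣ d) → p = 1) :
    ∃ D : ℕ, ∀ n, D ≤ n → n ∈ R := by
  classical
  set R₀ : Set ℕ := insert 0 R with hR₀
  have h0 : (0 : ℕ) ∈ R₀ := Set.mem_insert _ _
  have hadd₀ : ∀ a ∈ R₀, ∀ b ∈ R₀, a + b ∈ R₀ := by
    rintro a (rfl | ha) b (rfl | hb)
    · exact Set.mem_insert _ _
    · exact Set.mem_insert_of_mem _ (by simpa using hb)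
    · exact Set.mem_insert_of_mem _ (by simpa using ha)
    · exact Set.mem_insert_of_mem _ (hadd _ ha _ hb)
  have hmul₀ : ∀ a ∈ R₀, ∀ k : ℕ, k * a ∈ R₀ := by
    intro a ha k
    induction k with
    | zero => simpa using h0
    | succ k ih => simpa [Nat.succ_mul] using hadd₀ _ ih _ ha
  -- the set of positive "gaps" between elements of R₀
  set T : Set ℕ := {g | 0 < g ∧ ∃ x, x ∈ R₀ ∧ x + g ∈ R₀} with hT
  obtain ⟨a, haR, ha⟩ := hne
  have haR₀ : a ∈ R₀ := Set.mem_insert_of_mem _ haR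
  have hTne : T.Nonempty := ⟨a, ha, 0, h0, by simpa using haR₀⟩
  set g := sInf T with hg
  obtain ⟨hgpos, x, hx, hxg⟩ : g ∈ T := Nat.sInf_mem hTne
  -- g divides every element of R
  have hdvd : ∀ d ∈ R, g ∣ d := by
    intro d hd
    by_contra hnd
    have hrne : d % g ≠ 0 := fun h => hnd (Nat.dvd_of_mod_eq_zero h)
    obtain ⟨q, r, h1, hrg, hrpos⟩ : ∃ q r, q * g + r = d ∧ r < g ∧ 0 < r := by
      refine ⟨d / g, d % g, ?_, Nat.mod_lt _ hgpos, by omega⟩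
      have := Nat.div_add_mod d g
      have hc : d / g * g = g * (d / g) := mul_comm _ _
      omega
    -- two elements of R₀ differing by g - r
    have he1 : (q+1) * x + d ∈ R₀ :=
      hadd₀ _ (hmul₀ _ hx _) _ (Set.mem_insert_of_mem _ hd)
    have he2 : (q+1) * (x + g) ∈ R₀ := hmul₀ _ hxg _
    have hkey : ((q+1) * x + d) + (g - r) = (q+1) * (x + g) := by
      have e1 : (q+1) * (x + g) = (q+1) * x + (q+1) * g := by ring
      have e2 : (q+1) * g = q * g + g := by ring
      omega
    have hmem : g - r ∈ T := ⟨by omega, (q+1) * x + d, he1, by rw [hkey]; exact he2⟩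
    have := Nat.sInf_le hmem
    omega
  have hg1 : g = 1 := hgcd g hdvd
  rw [hg1] at hxg
  -- x and x + 1 are both in R₀
  rcases Nat.eq_zero_or_pos x with hx0 | hxpos
  · -- 1 ∈ R
    subst hx0
    have h1R : 1 ∈ R := by
      rcases Set.mem_insert_iff.mp hxg with h | h
      · exact absurd h (by norm_num)
      · simpa using h
    exact ⟨1, fun n hn => by simpa using mul_mem_addclosed R hadd h1R n (by omega)⟩
  · have hxR : x ∈ R := (Set.mem_insert_iff.mp hx).resolve_left (by omega)
    have hx1R : x + 1 ∈ R := (Set.mem_insert_iff.mp hxg).resolve_left (by omega)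
    refine ⟨x * x, fun n hn => ?_⟩
    obtain ⟨q, r, h1, hrx, hqr⟩ : ∃ q r, q * x + r = n ∧ r < x ∧ r ≤ q := by
      refine ⟨n / x, n % x, ?_, Nat.mod_lt _ hxpos, ?_⟩
      · have := Nat.div_add_mod n x
        have hc : n / x * x = x * (n / x) := mul_comm _ _
        omega
      · have hqx : x ≤ n / x := by
          rw [Nat.le_div_iff_mul_le hxpos]; nlinarith
        have := Nat.mod_lt n hxpos
        omega
    have hq1 : 1 ≤ q := by
      rcases Nat.eq_zero_or_pos q with h | h
      · subst h
        have hle : x ≤ x * x := Nat.le_mul_of_pos_left _ hxpos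
        omega
      · exact h
    have hmem := combo_mem_addclosed R hadd hxR hx1R (q - r) r (by omega)
    have heq : (q - r) * x + r * (x + 1) = n := by
      have e1 : (q - r) * x = q * x - r * x := Nat.sub_mul _ _ _
      have e2 : r * (x + 1) = r * x + r := by ring
      have e3 : r * x ≤ q * x := Nat.mul_le_mul_right _ hqr
      omega
    rwa [heq] at hmem


section MatrixBasics
variable {S : Type} [Fintype S] [DecidableEq S]

lemma pow_entry_nonneg {Q : Matrix S S ℝ} (h0 : ∀ s t, 0 ≤ Q s t) (n : ℕ) :
    ∀ s t, 0 ≤ (Q ^ n) s t := by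
  induction n with
  | zero => intro s t; rw [pow_zero, Matrix.one_apply]; split <;> norm_num
  | succ n ih =>
    intro s t
    rw [pow_succ, Matrix.mul_apply]
    exact Finset.sum_nonneg fun u _ => mul_nonneg (ih s u) (h0 u t)

lemma pow_row_sum {Q : Matrix S S ℝ} (h1 : ∀ s, ∑ t, Q s t = 1) (n : ℕ) :
    ∀ s, ∑ t, (Q ^ n) s t = 1 := by
  induction n with
  | zero => intro s; simp [Matrix.one_apply]
  | succ n ih =>
    intro s
    simp only [pow_succ, Matrix.mul_apply]
    rw [Finset.sum_comm]
    calc ∑ u, ∑ t, (Q ^ n) s u * Q u t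
        = ∑ u, (Q ^ n) s u * ∑ t, Q u t := by simp [Finset.mul_sum]
      _ = 1 := by simp only [h1]; simpa using ih s

lemma pow_entry_prod_le {Q : Matrix S S ℝ} (h0 : ∀ s t, 0 ≤ Q s t) (p q : ℕ)
    (a b c : S) : (Q ^ p) a b * (Q ^ q) b c ≤ (Q ^ (p + q)) a c := by
  rw [pow_add, Matrix.mul_apply]
  exact Finset.single_le_sum
    (f := fun u => (Q ^ p) a u * (Q ^ q) u c)
    (fun u _ => mul_nonneg (pow_entry_nonneg h0 p a u) (pow_entry_nonneg h0 q u c))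
    (Finset.mem_univ b)

end MatrixBasics

section Doeblin
variable {S : Type} [Fintype S] [DecidableEq S] [Nonempty S]

/-- Doeblin convergence: a row-stochastic matrix with some power having all
entries `≥ ε > 0` has convergent powers, with limit independent of the row. -/
theorem doeblin_convergence (Q : Matrix S S ℝ) (h0 : ∀ s t, 0 ≤ Q s t)
    (h1 : ∀ s, ∑ t, Q s t = 1) (N : ℕ) (ε : ℝ) (hε : 0 < ε)
    (hN : ∀ s t, ε ≤ (Q ^ N) s t) :
    ∃ π : S → ℝ, ∀ s s', Tendsto (fun n : ℕ => (Q ^ n) s s') atTop (nhds (π s')) := by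
  classical
  have hU : (Finset.univ : Finset S).Nonempty := Finset.univ_nonempty
  set c : ℝ := (Fintype.card S : ℝ) with hc
  -- max and min of columns
  set Mx : S → ℕ → ℝ := fun t n => Finset.univ.sup' hU (fun s => (Q ^ n) s t) with hMx
  set mn : S → ℕ → ℝ := fun t n => Finset.univ.inf' hU (fun s => (Q ^ n) s t) with hmn
  have hmle : ∀ t n s, mn t n ≤ (Q ^ n) s t := fun t n s =>
    Finset.inf'_le (f := fun s => (Q ^ n) s t) (mem_univ s)
  have hleM : ∀ t n s, (Q ^ n) s t ≤ Mx t n := fun t n s =>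
    Finset.le_sup' (f := fun s => (Q ^ n) s t) (mem_univ s)
  have hmn0 : ∀ t n, 0 ≤ mn t n := fun t n => Finset.le_inf' _ _ fun s _ => pow_entry_nonneg h0 n s t
  -- Mx is antitone, mn is monotone
  have hManti : ∀ t, Antitone (Mx t) := by
    intro t
    refine antitone_nat_of_succ_le fun n => ?_
    refine Finset.sup'_le _ _ fun s _ => ?_
    rw [pow_succ', Matrix.mul_apply]
    calc ∑ u, Q s u * (Q ^ n) u t ≤ ∑ u, Q s u * Mx t n :=
          Finset.sum_le_sum fun u _ => mul_le_mul_of_nonneg_left (hleM t n u) (h0 s u)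
      _ = Mx t n := by rw [← Finset.sum_mul, h1, one_mul]
  have hmmono : ∀ t, Monotone (mn t) := by
    intro t
    refine monotone_nat_of_le_succ fun n => ?_
    refine Finset.le_inf' _ _ fun s _ => ?_
    rw [pow_succ', Matrix.mul_apply]
    calc mn t n = ∑ u, Q s u * mn t n := by rw [← Finset.sum_mul, h1, one_mul]
      _ ≤ ∑ u, Q s u * (Q ^ n) u t :=
          Finset.sum_le_sum fun u _ => mul_le_mul_of_nonneg_left (hmle t n u) (h0 s u)
  have hmM : ∀ t n, mn t n ≤ Mx t n := fun t n => (hmle t n (Classical.arbitrary S)).trans (hleM t n _)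
  -- contraction
  have hcε : c * ε ≤ 1 := by
    have s0 := Classical.arbitrary S
    calc c * ε = ∑ _u : S, ε := by simp [hc, mul_comm]
      _ ≤ ∑ u, (Q ^ N) s0 u := Finset.sum_le_sum fun u _ => hN s0 u
      _ = 1 := pow_row_sum h1 N s0
  have hcpos : 0 < c := by
    simp only [hc]
    exact_mod_cast Fintype.card_pos
  set r : ℝ := 1 - c * ε with hr
  have hr0 : 0 ≤ r := by simp [hr]; linarith
  have hr1 : r < 1 := by simp only [hr]; nlinarith
  have hcontr : ∀ t n, Mx t (N + n) - mn t (N + n) ≤ r * (Mx t n - mn t n) := by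
    intro t n
    set T : ℝ := ∑ u, (Q ^ n) u t with hT
    have hsplit : ∀ s, (Q ^ (N + n)) s t
        = (∑ u, ((Q ^ N) s u - ε) * (Q ^ n) u t) + ε * T := by
      intro s
      rw [pow_add, Matrix.mul_apply]
      simp only [sub_mul, Finset.sum_sub_distrib, hT, Finset.mul_sum]
      ring
    have hrem : ∀ s, ∑ u, ((Q ^ N) s u - ε) = r := by
      intro s
      rw [Finset.sum_sub_distrib, pow_row_sum h1 N s]
      simp [hr, hc, mul_comm]
    have hup : ∀ s, (Q ^ (N + n)) s t ≤ r * Mx t n + ε * T := by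
      intro s
      rw [hsplit s]
      have : ∑ u, ((Q ^ N) s u - ε) * (Q ^ n) u t ≤ ∑ u, ((Q ^ N) s u - ε) * Mx t n :=
        Finset.sum_le_sum fun u _ =>
          mul_le_mul_of_nonneg_left (hleM t n u) (by linarith [hN s u])
      rw [← Finset.sum_mul, hrem s] at this
      linarith
    have hlo : ∀ s, r * mn t n + ε * T ≤ (Q ^ (N + n)) s t := by
      intro s
      rw [hsplit s]
      have : ∑ u, ((Q ^ N) s u - ε) * mn t n ≤ ∑ u, ((Q ^ N) s u - ε) * (Q ^ n) u t :=
        Finset.sum_le_sum fun u _ =>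
          mul_le_mul_of_nonneg_left (hmle t n u) (by linarith [hN s u])
      rw [← Finset.sum_mul, hrem s] at this
      linarith
    have h1' : Mx t (N + n) ≤ r * Mx t n + ε * T := Finset.sup'_le _ _ fun s _ => hup s
    have h2' : r * mn t n + ε * T ≤ mn t (N + n) := Finset.le_inf' _ _ fun s _ => hlo s
    linarith [mul_le_mul_of_nonneg_left (hmM t n) hr0]
  -- the gap tends to zero
  have hgap0 : ∀ t, Tendsto (fun n => Mx t n - mn t n) atTop (nhds 0) := by
    intro t
    set gap : ℕ → ℝ := fun n => Mx t n - mn t n with hgap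
    have hganti : Antitone gap := fun m n hmn' => by
      have := hManti t hmn'
      have := hmmono t hmn'
      simp only [hgap]; linarith
    have hgnn : ∀ n, 0 ≤ gap n := fun n => by simp only [hgap]; linarith [hmM t n]
    have hbdd : BddBelow (Set.range gap) := ⟨0, by rintro x ⟨n, rfl⟩; exact hgnn n⟩
    have htend : Tendsto gap atTop (nhds (⨅ n, gap n)) := tendsto_atTop_ciInf hganti hbdd
    have hiter : ∀ k : ℕ, gap (k * N) ≤ r ^ k * gap 0 := by
      intro k
      induction k with
      | zero => simp
      | succ k ih =>
        have h' : gap (N + k * N) ≤ r * gap (k * N) := hcontr t (k * N)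
        have : gap ((k + 1) * N) = gap (N + k * N) := by ring_nf
        rw [this]
        calc gap (N + k * N) ≤ r * gap (k * N) := h'
          _ ≤ r * (r ^ k * gap 0) := mul_le_mul_of_nonneg_left ih hr0
          _ = r ^ (k + 1) * gap 0 := by ring
    have hinf0 : (⨅ n, gap n) = 0 := by
      have hle0 : (⨅ n, gap n) ≤ 0 := by
        by_contra hpos
        push_neg at hpos
        have hg0 : 0 ≤ gap 0 := hgnn 0
        obtain ⟨k, hk⟩ := ((tendsto_pow_atTop_nhds_zero_of_lt_one hr0 hr1).eventually
          (eventually_lt_nhds (div_pos hpos (by linarith : (0:ℝ) < gap 0 + 1)))).exists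
        have h1'' : (⨅ n, gap n) ≤ gap (k * N) := ciInf_le hbdd (k * N)
        have h2'' := hiter k
        have h3 : r ^ k * gap 0 ≤ (⨅ n, gap n) / (gap 0 + 1) * gap 0 :=
          mul_le_mul_of_nonneg_right hk.le hg0
        have h4 : (⨅ n, gap n) / (gap 0 + 1) * gap 0 < ⨅ n, gap n := by
          rw [div_mul_eq_mul_div, div_lt_iff₀ (by linarith)]
          nlinarith
        exact lt_irrefl _ (h4.trans_le (h1''.trans (h2''.trans h3)))
      have hge0 : (0:ℝ) ≤ ⨅ n, gap n := le_ciInf hgnn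
      linarith
    rwa [hinf0] at htend
  -- the limit
  refine ⟨fun t => ⨅ n, Mx t n, fun s t => ?_⟩
  have hbddM : BddBelow (Set.range (Mx t)) :=
    ⟨0, by rintro x ⟨n, rfl⟩; exact (hmn0 t n).trans (hmM t n)⟩
  have hMtend : Tendsto (Mx t) atTop (nhds (⨅ n, Mx t n)) :=
    tendsto_atTop_ciInf (hManti t) hbddM
  have hmtend : Tendsto (mn t) atTop (nhds (⨅ n, Mx t n)) := by
    have := hMtend.sub (hgap0 t)
    simpa using this
  exact tendsto_of_tendsto_of_tendsto_of_le_of_le hmtend hMtend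
    (fun n => hmle t n s) (fun n => hleM t n s)

end Doeblin

section Package
variable {S : Type} [Fintype S] [DecidableEq S] [Nonempty S]

theorem stationary_package (Q : Matrix S S ℝ) (h0 : ∀ s t, 0 ≤ Q s t)
    (h1 : ∀ s, ∑ t, Q s t = 1) (π : S → ℝ)
    (hconv : ∀ s s', Tendsto (fun n : ℕ => (Q ^ n) s s') atTop (nhds (π s'))) :
    ((∀ s, 0 ≤ π s) ∧ (∑ s, π s = 1) ∧ (∀ s', ∑ s, π s * Q s s' = π s')) ∧
    (∀ π' : S → ℝ,
      ((∀ s, 0 ≤ π' s) ∧ (∑ s, π' s = 1) ∧ (∀ s', ∑ s, π' s * Q s s' = π' s')) → π' = π) := by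
  classical
  obtain ⟨s0⟩ := ‹Nonempty S›
  have hπ0 : ∀ s, 0 ≤ π s := fun s =>
    ge_of_tendsto (hconv s0 s) (Eventually.of_forall fun n => pow_entry_nonneg h0 n s0 s)
  have hπ1 : ∑ s, π s = 1 := by
    have hsum : Tendsto (fun n : ℕ => ∑ t, (Q ^ n) s0 t) atTop (nhds (∑ t, π t)) :=
      tendsto_finset_sum _ fun t _ => hconv s0 t
    have hconst : (fun n : ℕ => ∑ t, (Q ^ n) s0 t) = fun _ => 1 :=
      funext fun n => pow_row_sum h1 n s0
    rw [hconst] at hsum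
    exact tendsto_nhds_unique hsum tendsto_const_nhds
  have hπstat : ∀ s', ∑ s, π s * Q s s' = π s' := by
    intro s'
    have hA : Tendsto (fun n : ℕ => (Q ^ (n + 1)) s0 s') atTop (nhds (π s')) :=
      (hconv s0 s').comp (tendsto_add_atTop_nat 1)
    have hB : Tendsto (fun n : ℕ => (Q ^ (n + 1)) s0 s') atTop (nhds (∑ u, π u * Q u s')) := by
      have : (fun n : ℕ => (Q ^ (n + 1)) s0 s')
          = fun n : ℕ => ∑ u, (Q ^ n) s0 u * Q u s' := by
        funext n; rw [pow_succ, Matrix.mul_apply]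
      rw [this]
      exact tendsto_finset_sum _ fun u _ => (hconv s0 u).mul_const _
    exact (tendsto_nhds_unique hB hA)
  refine ⟨⟨hπ0, hπ1, hπstat⟩, ?_⟩
  rintro π' ⟨-, hπ'1, hπ'stat⟩
  have hiter : ∀ n s', ∑ s, π' s * (Q ^ n) s s' = π' s' := by
    intro n
    induction n with
    | zero => intro s'; simp [Matrix.one_apply]
    | succ n ih =>
      intro s'
      have : ∑ s, π' s * (Q ^ (n + 1)) s s'
          = ∑ u, (∑ s, π' s * (Q ^ n) s u) * Q u s' := by
        simp only [pow_succ, Matrix.mul_apply, Finset.mul_sum, Finset.sum_mul]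
        rw [Finset.sum_comm]
        exact Finset.sum_congr rfl fun u _ => Finset.sum_congr rfl fun s _ => by ring
      rw [this]
      simp only [ih]
      exact hπ'stat s'
  funext s'
  have hL : Tendsto (fun n : ℕ => ∑ s, π' s * (Q ^ n) s s') atTop (nhds (∑ s, π' s * π s')) :=
    tendsto_finset_sum _ fun s _ => (hconv s s').const_mul _
  have hconst : (fun n : ℕ => ∑ s, π' s * (Q ^ n) s s') = fun _ => π' s' :=
    funext fun n => hiter n s'
  rw [hconst] at hL
  have : π' s' = ∑ s, π' s * π s' := (tendsto_nhds_unique hL tendsto_const_nhds).symm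
  rw [this, ← Finset.sum_mul, hπ'1, one_mul]

end Package


lemma exists_pos_of_sum_pos {α : Type*} [Fintype α] {f : α → ℝ}
    (h : 0 < ∑ a, f a) : ∃ a, 0 < f a := by
  by_contra hc
  push_neg at hc
  exact absurd (Finset.sum_nonpos fun a _ => hc a) (by linarith)

/-- Under assumptions (A.1) and (A.2), the Markov chain with transition
matrix `Q` on the finite state space `S` has a unique stationary distribution `π`,
and the `n`-step transition probabilities `(Q^n)(s,s')` converge to `π(s')`. -/
theorem stmt_3
    {Bty Hty : Type} [Fintype Bty] [Fintype Hty] [Nonempty Bty] [Nonempty Hty]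
    [DecidableEq Bty] [DecidableEq Hty]
    (w : Bty → Hty → ℝ) (hw0 : ∀ b k, 0 ≤ w b k) (hw1 : ∀ b, ∑ k, w b k = 1)
    (M : Hty → Matrix Bty Bty ℝ) (hM0 : ∀ k m n, 0 ≤ M k m n)
    (hM1 : ∀ k m, ∑ n, M k m n = 1)
    -- (A.1) irreducibility of each M_k
    (hA1irr : ∀ (k : Hty) (m n : Bty), ∃ d : ℕ, 1 ≤ d ∧ 0 < (M k ^ d) m n)
    -- (A.1) aperiodicity of each M_k
    (hA1aper : ∀ (k : Hty) (m : Bty) (p : ℕ),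
      (∀ d : ℕ, 1 ≤ d → 0 < (M k ^ d) m m → p ∣ d) → p = 1)
    -- (A.2)
    (hA2 : ∀ b k, 0 < w b k)
    -- the transition matrix Q on S
    (Q : Matrix (ABPState M) (ABPState M) ℝ)
    (hQ : ∀ s s' : ABPState M, Q s s' =
      if s'.1.2.1 = s.1.2.2 then w s'.1.2.1 s'.1.1 * M s'.1.1 s'.1.2.1 s'.1.2.2 else 0) :
    ∃ π : ABPState M → ℝ,
      ((∀ s, 0 ≤ π s) ∧ (∑ s, π s = 1) ∧ (∀ s', ∑ s, π s * Q s s' = π s')) ∧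
      (∀ π' : ABPState M → ℝ,
        ((∀ s, 0 ≤ π' s) ∧ (∑ s, π' s = 1) ∧ (∀ s', ∑ s, π' s * Q s s' = π' s')) → π' = π) ∧
      (∀ s s' : ABPState M,
        Filter.Tendsto (fun n : ℕ => (Q ^ n) s s') Filter.atTop (nhds (π s'))) := by
  classical
  -- the state space is nonempty
  have hSne : Nonempty (ABPState M) := by
    obtain ⟨k0⟩ := ‹Nonempty Hty›
    obtain ⟨b0⟩ := ‹Nonempty Bty›
    obtain ⟨n0, hn0⟩ : ∃ n, 0 < M k0 b0 n :=
      exists_pos_of_sum_pos (by rw [hM1 k0 b0]; norm_num)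
    exact ⟨⟨(k0, b0, n0), hn0⟩⟩
  -- Q has nonnegative entries
  have hQ0 : ∀ s t : ABPState M, 0 ≤ Q s t := by
    intro s t
    rw [hQ]
    split
    · exact mul_nonneg (hw0 _ _) (hM0 _ _ _)
    · exact le_refl 0
  -- Q is row-stochastic
  have hQ1 : ∀ s : ABPState M, ∑ t, Q s t = 1 := by
    intro s
    have h1 : ∑ p ∈ Finset.univ.filter (fun p : Hty × Bty × Bty => 0 < M p.1 p.2.1 p.2.2),
          (if p.2.1 = s.1.2.2 then w p.2.1 p.1 * M p.1 p.2.1 p.2.2 else 0)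
        = ∑ t : ABPState M, Q s t := by
      rw [Finset.sum_subtype (p := fun p : Hty × Bty × Bty => 0 < M p.1 p.2.1 p.2.2)
        (Finset.univ.filter fun p : Hty × Bty × Bty => 0 < M p.1 p.2.1 p.2.2)
        (fun p => by simp)]
      exact Finset.sum_congr rfl fun t _ => (hQ s t).symm
    have h2 : ∑ p : Hty × Bty × Bty,
          (if p.2.1 = s.1.2.2 then w p.2.1 p.1 * M p.1 p.2.1 p.2.2 else 0)
        = ∑ p ∈ Finset.univ.filter (fun p : Hty × Bty × Bty => 0 < M p.1 p.2.1 p.2.2),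
          (if p.2.1 = s.1.2.2 then w p.2.1 p.1 * M p.1 p.2.1 p.2.2 else 0) := by
      refine (Finset.sum_subset (Finset.filter_subset _ _) ?_).symm
      intro p _ hp
      simp only [Finset.mem_filter, Finset.mem_univ, true_and, not_lt] at hp
      have : M p.1 p.2.1 p.2.2 = 0 := le_antisymm hp (hM0 _ _ _)
      rw [this, mul_zero, ite_self]
    rw [← h1, ← h2]
    rw [Fintype.sum_prod_type]
    have hinner : ∀ k : Hty, ∑ q : Bty × Bty,
        (if q.1 = s.1.2.2 then w q.1 k * M k q.1 q.2 else 0) = w s.1.2.2 k := by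
      intro k
      rw [Fintype.sum_prod_type]
      have h3 : ∀ m : Bty, ∑ n, (if m = s.1.2.2 then w m k * M k m n else 0)
          = if m = s.1.2.2 then w m k else 0 := by
        intro m
        by_cases h : m = s.1.2.2
        · simp only [h, if_true]
          rw [← Finset.mul_sum, hM1, mul_one]
        · simp [h]
      simp only [h3]
      simp [Finset.sum_ite_eq']
    simp only [hinner]
    exact hw1 _
  -- positivity of one Q-step
  have hQstep : ∀ s t : ABPState M, t.1.2.1 = s.1.2.2 → 0 < Q s t := by
    intro s t h
    rw [hQ, if_pos h]
    exact mul_pos (hA2 _ _) t.2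
  -- primitivity of M k0 for a fixed k0
  obtain ⟨k0⟩ := ‹Nonempty Hty›
  have hloop : ∀ m : Bty, ∃ D : ℕ, ∀ d, D ≤ d → 0 < (M k0 ^ d) m m := by
    intro m
    obtain ⟨D, hD⟩ := eventually_mem_of_addclosed_gcd_one
      {d : ℕ | 0 < d ∧ 0 < (M k0 ^ d) m m}
      (by
        rintro a ⟨ha1, ha2⟩ b ⟨hb1, hb2⟩
        exact ⟨by omega, lt_of_lt_of_le (mul_pos ha2 hb2)
          (pow_entry_prod_le (hM0 k0) a b m m m)⟩)
      (by
        obtain ⟨d, hd1, hd2⟩ := hA1irr k0 m m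
        exact ⟨d, ⟨by omega, hd2⟩, by omega⟩)
      (fun p hp => hA1aper k0 m p (fun d hd1 hd2 => hp d ⟨by omega, hd2⟩))
    exact ⟨D, fun d hd => (hD d hd).2⟩
  have hprim : ∃ D : ℕ, ∀ d, D ≤ d → ∀ a b : Bty, 0 < (M k0 ^ d) a b := by
    choose e he1 he2 using fun a b => hA1irr k0 a b
    choose D hD using hloop
    refine ⟨(Finset.univ.sup fun a => Finset.univ.sup (e a)) + Finset.univ.sup D,
      fun d hd a b => ?_⟩
    have hea : e a b ≤ Finset.univ.sup fun a => Finset.univ.sup (e a) :=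
      le_trans (Finset.le_sup (f := e a) (Finset.mem_univ b))
        (Finset.le_sup (f := fun a => Finset.univ.sup (e a)) (Finset.mem_univ a))
    have hDb : D b ≤ Finset.univ.sup D := Finset.le_sup (Finset.mem_univ b)
    have hdd : e a b + (d - e a b) = d := by omega
    have hpos := mul_pos (he2 a b) (hD b (d - e a b) (by omega))
    calc (0:ℝ) < (M k0 ^ e a b) a b * (M k0 ^ (d - e a b)) b b := hpos
      _ ≤ (M k0 ^ (e a b + (d - e a b))) a b := pow_entry_prod_le (hM0 k0) _ _ a b b
      _ = (M k0 ^ d) a b := by rw [hdd]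
  obtain ⟨D, hD⟩ := hprim
  -- positivity of powers of Q along M-k0-paths
  have hP2 : ∀ d : ℕ, ∀ s t : ABPState M,
      0 < (M k0 ^ d) s.1.2.2 t.1.2.1 → 0 < (Q ^ (d + 1)) s t := by
    intro d
    induction d with
    | zero =>
      intro s t h
      rw [pow_zero, Matrix.one_apply] at h
      have heq : s.1.2.2 = t.1.2.1 := by
        by_contra hne
        rw [if_neg hne] at h
        exact lt_irrefl 0 h
      rw [zero_add, pow_one]
      exact hQstep s t heq.symm
    | succ d ih =>
      intro s t h
      rw [pow_succ', Matrix.mul_apply] at h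
      obtain ⟨c, hc⟩ := exists_pos_of_sum_pos h
      have hc1 : 0 < M k0 s.1.2.2 c := by
        rcases mul_pos_iff.mp hc with ⟨h1, _⟩ | ⟨h1, _⟩
        · exact h1
        · exact absurd h1 (not_lt.mpr (hM0 _ _ _))
      have hc2 : 0 < (M k0 ^ d) c t.1.2.1 := by
        rcases mul_pos_iff.mp hc with ⟨_, h2⟩ | ⟨_, h2⟩
        · exact h2
        · exact absurd h2 (not_lt.mpr (pow_entry_nonneg (hM0 k0) d _ _))
      set u : ABPState M := ⟨(k0, s.1.2.2, c), hc1⟩ with hu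
      have hQsu : 0 < Q s u := hQstep s u rfl
      have hQut : 0 < (Q ^ (d + 1)) u t := ih u t hc2
      have : (0:ℝ) < (Q ^ 1) s u * (Q ^ (d + 1)) u t := by
        rw [pow_one]; exact mul_pos hQsu hQut
      calc (0:ℝ) < (Q ^ 1) s u * (Q ^ (d + 1)) u t := this
        _ ≤ (Q ^ (1 + (d + 1))) s t := pow_entry_prod_le hQ0 _ _ s u t
        _ = (Q ^ (d + 1 + 1)) s t := by rw [add_comm]
  have hQN : ∀ s t : ABPState M, 0 < (Q ^ (D + 1)) s t :=
    fun s t => hP2 D s t (hD D le_rfl _ _)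
  -- a uniform positive lower bound on the entries of Q ^ (D + 1)
  have hU : (Finset.univ : Finset (ABPState M × ABPState M)).Nonempty := Finset.univ_nonempty
  set ε : ℝ := Finset.univ.inf' hU (fun p : ABPState M × ABPState M => (Q ^ (D + 1)) p.1 p.2)
    with hε
  have hεpos : 0 < ε := by
    rw [hε, Finset.lt_inf'_iff]
    exact fun p _ => hQN p.1 p.2
  have hεle : ∀ s t : ABPState M, ε ≤ (Q ^ (D + 1)) s t := fun s t =>
    Finset.inf'_le (f := fun p : ABPState M × ABPState M => (Q ^ (D + 1)) p.1 p.2)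
      (Finset.mem_univ (s, t))
  obtain ⟨π, hconv⟩ := doeblin_convergence Q hQ0 hQ1 (D + 1) ε hεpos hεle
  obtain ⟨hmain, huniq⟩ := stationary_package Q hQ0 hQ1 π hconv
  exact ⟨π, hmain, huniq, hconv⟩
end

section
/- (Hoeffding inequality for uniformly ergodic Markov chains.) Suppose there exist a probability vector φ on S, a real λ > 0, and an integer m ≥ 1 such that (P^m)(x, y) ≥ λ·φ(y) for all x, y ∈ S. Let g : S → ℝ with ‖g‖ := max_{x∈S} |g(x)| > 0, and let S_T = (1/T)·Σ_{t=1}^T g(X_t). Then for every ε > 0 and every integer T > 2‖g‖m/(λε), the probability under the stationary chain of length T+1 (with states X_0, X_1, ..., X_T) that |S_T − Σ_{x∈S} π(x)·g(x)| ≥ ε is at most 2·exp(−λ²·(Tε − 2‖g‖m/λ)² / (2T‖g‖²m²)). -/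
/-!
Center `g` at its stationary mean, `ĝ = g - π ⬝ᵥ g`, and solve the Poisson equation
`u = ĝ + P u` by `u = ∑ₖ Pᵏ ĝ`. The minorization `Pᵐ ≥ λ 𝟙 φᵀ` writes `Pᵐ` as a rank-one
matrix plus a nonnegative matrix of row sums `1 - λ`, so `Pᵐ` shrinks oscillations by the factor
`1 - λ`; hence the series converges and `u` oscillates by at most `2‖g‖m/λ`. Along a path,
`∑ₜ ĝ(Xₜ₊₁) = M_T + (Pu(X₀) - Pu(X_T))`, where the martingale `M` has conditionally centred
increments `u(Xₜ₊₁) - Pu(Xₜ)` of range at most `2‖g‖m/λ`. Hoeffding's lemma bounds each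
conditional moment generating function, and a two-sided Chernoff bound at the optimal parameter
gives the estimate, the boundary term costing the shift `2‖g‖m/λ`.
-/

open Finset Matrix MeasureTheory ProbabilityTheory

lemma sum_mul_exp_le_of_mem_Icc {ι : Type*} [Fintype ι] {w D : ι → ℝ} {a b : ℝ}
    (hw0 : ∀ i, 0 ≤ w i) (hw1 : ∑ i, w i = 1) (hD : ∀ i, D i ∈ Set.Icc a b)
    (hmean : ∑ i, w i * D i = 0) (t : ℝ) :
    ∑ i, w i * Real.exp (t * D i) ≤ Real.exp (t ^ 2 * (b - a) ^ 2 / 8) := by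
  let _ : MeasurableSpace ι := ⊤
  have hw1' : ∑ i, ENNReal.ofReal (w i) = 1 := by
    rw [← ENNReal.ofReal_sum_of_nonneg fun i _ => hw0 i, hw1, ENNReal.ofReal_one]
  set μ := (PMF.ofFintype _ hw1').toMeasure
  have hint (f : ι → ℝ) : ∫ i, f i ∂μ = ∑ i, w i * f i := by
    simp [μ, PMF.integral_eq_sum, ENNReal.toReal_ofReal (hw0 _)]
  have hoeffding := (hasSubgaussianMGF_of_mem_Icc_of_integral_eq_zero (μ := μ)
    (measurable_of_countable D).aemeasurable (ae_of_all _ hD) ((hint D).trans hmean)).mgf_le t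
  rw [mgf, hint] at hoeffding
  convert hoeffding using 2
  simp only [NNReal.coe_pow, NNReal.coe_div, coe_nnnorm, Real.norm_eq_abs, NNReal.coe_ofNat,
    div_pow, sq_abs]
  ring

lemma sum_indicator_le_exp_mul {Ω : Type*} [Fintype Ω] {p W : Ω → ℝ} (hp : ∀ ω, 0 ≤ p ω)
    {A : Set Ω} {a : ℝ} (hA : ∀ ω ∈ A, a ≤ |W ω|) {s : ℝ} (hs : 0 ≤ s) :
    ∑ ω, A.indicator p ω ≤
      (∑ ω, p ω * Real.exp (s * W ω) + ∑ ω, p ω * Real.exp (-s * W ω)) * Real.exp (-(s * a)) := by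
  rw [add_mul, sum_mul, sum_mul, ← sum_add_distrib]
  refine sum_le_sum fun ω _ => ?_
  have hpos (t : ℝ) : 0 ≤ p ω * Real.exp t * Real.exp (-(s * a)) :=
    mul_nonneg (mul_nonneg (hp ω) (Real.exp_pos _).le) (Real.exp_pos _).le
  by_cases hω : ω ∈ A
  · rw [Set.indicator_of_mem hω, mul_assoc, mul_assoc, ← mul_add, ← Real.exp_add, ← Real.exp_add]
    refine le_mul_of_one_le_right (hp ω) ?_
    rcases le_abs'.1 (hA ω hω) with hW | hW
    · have : 1 ≤ Real.exp (-s * W ω + -(s * a)) := Real.one_le_exp (by nlinarith)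
      linarith [Real.exp_pos (s * W ω + -(s * a))]
    · have : 1 ≤ Real.exp (s * W ω + -(s * a)) := Real.one_le_exp (by nlinarith)
      linarith [Real.exp_pos (-s * W ω + -(s * a))]
  · rw [Set.indicator_of_notMem hω]
    exact add_nonneg (hpos _) (hpos _)

lemma hasSum_pow_div {r : ℝ} (hr0 : 0 ≤ r) (hr1 : r < 1) (m : ℕ) [NeZero m] :
    HasSum (fun k : ℕ => r ^ (k / m)) (m * (1 - r)⁻¹) := by
  have hgeom := hasSum_geometric_of_lt_one hr0 hr1
  have hconst := hasSum_fintype fun _ : Fin m => (1 : ℝ)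
  have hsum : Summable fun p : ℕ × Fin m => r ^ p.1 * (1 : ℝ) :=
    summable_mul_of_summable_norm (f := fun k : ℕ => r ^ k) (g := fun _ : Fin m => (1 : ℝ))
      (by simpa [abs_of_nonneg hr0] using hgeom.summable) (by simpa using hconst.summable)
  have := (Nat.divModEquiv m).hasSum_iff.mpr (hgeom.mul hconst hsum)
  simp only [mul_one, Function.comp_def, Nat.divModEquiv_apply] at this
  simpa [mul_comm] using this

lemma Fin.sum_univ_succ_sub_castSucc {M : Type*} [AddCommGroup M] :
    ∀ {n : ℕ} (f : Fin (n + 1) → M), ∑ t : Fin n, (f t.succ - f t.castSucc) = f (Fin.last n) - f 0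
  | 0, _ => by simp
  | n + 1, f => by
    simp only [Fin.sum_univ_castSucc, Fin.succ_castSucc]
    rw [Fin.sum_univ_succ_sub_castSucc fun t => f t.castSucc]
    simp

@[to_additive]
lemma Fin.prod_univ_snoc_castSucc_succ {α M : Type*} [CommMonoid M] {n : ℕ} (f : α → α → M)
    (ρ : Fin (n + 1) → α) (y : α) :
    ∏ t : Fin (n + 1), f ((Fin.snoc ρ y : Fin (n + 2) → α) t.castSucc)
      ((Fin.snoc ρ y : Fin (n + 2) → α) t.succ) =
      (∏ t : Fin n, f (ρ t.castSucc) (ρ t.succ)) * f (ρ (Fin.last n)) y := by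
  rw [Fin.prod_univ_castSucc]
  simp only [Fin.succ_castSucc, Fin.snoc_castSucc, Fin.succ_last, Fin.snoc_last]

section Path

variable {S : Type*}

def pathWeight (π : S → ℝ) (P : Matrix S S ℝ) {n : ℕ} (ω : Fin (n + 1) → S) : ℝ :=
  π (ω 0) * ∏ t : Fin n, P (ω t.castSucc) (ω t.succ)

lemma pathWeight_nonneg {π : S → ℝ} {P : Matrix S S ℝ} (hπ0 : ∀ x, 0 ≤ π x)
    (hP0 : ∀ x y, 0 ≤ P x y) {n : ℕ} (ω : Fin (n + 1) → S) : 0 ≤ pathWeight π P ω :=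
  mul_nonneg (hπ0 _) (prod_nonneg fun _ _ => hP0 _ _)

lemma pathWeight_snoc (π : S → ℝ) (P : Matrix S S ℝ) {n : ℕ} (ρ : Fin (n + 1) → S) (y : S) :
    pathWeight π P (Fin.snoc ρ y : Fin (n + 2) → S) = pathWeight π P ρ * P (ρ (Fin.last n)) y := by
  rw [pathWeight, pathWeight, Fin.prod_univ_snoc_castSucc_succ (fun a b => P a b), mul_assoc]
  rw [← Fin.castSucc_zero (n := n + 1), Fin.snoc_castSucc]

variable [Fintype S]

lemma sum_pathWeight_mul_exp_le [Nonempty S] {π : S → ℝ} {P : Matrix S S ℝ}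
    (hπ0 : ∀ x, 0 ≤ π x) (hπ1 : ∑ x, π x = 1) (hP0 : ∀ x y, 0 ≤ P x y) (F : S → S → ℝ)
    {E : ℝ} (hE : ∀ x, ∑ y, P x y * Real.exp (F x y) ≤ E) :
    ∀ n : ℕ, ∑ ω : Fin (n + 1) → S,
      pathWeight π P ω * Real.exp (∑ t : Fin n, F (ω t.castSucc) (ω t.succ)) ≤ E ^ n
  | 0 => by
    rw [pow_zero, ← hπ1]
    exact (Fintype.sum_equiv (Equiv.funUnique (Fin 1) S) _ _ fun ω => by simp [pathWeight]).le
  | n + 1 => by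
    have hE0 : 0 ≤ E := (sum_nonneg fun y _ => mul_nonneg (hP0 _ y) (Real.exp_pos _).le).trans
      (hE (Classical.arbitrary S))
    rw [← (Fin.snocEquiv fun _ => S).sum_comp, Fintype.sum_prod_type, sum_comm, pow_succ]
    calc ∑ ρ : Fin (n + 1) → S, ∑ y, pathWeight π P (Fin.snoc ρ y : Fin (n + 2) → S) *
          Real.exp (∑ t : Fin (n + 1), F ((Fin.snoc ρ y : Fin (n + 2) → S) t.castSucc)
            ((Fin.snoc ρ y : Fin (n + 2) → S) t.succ))
        = ∑ ρ : Fin (n + 1) → S, pathWeight π P ρ *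
            Real.exp (∑ t : Fin n, F (ρ t.castSucc) (ρ t.succ)) *
            ∑ y, P (ρ (Fin.last n)) y * Real.exp (F (ρ (Fin.last n)) y) := by
          simp only [pathWeight_snoc, Fin.sum_univ_snoc_castSucc_succ, Real.exp_add, mul_sum]
          exact sum_congr rfl fun ρ _ => sum_congr rfl fun y _ => by ring
      _ ≤ ∑ ρ : Fin (n + 1) → S, pathWeight π P ρ *
            Real.exp (∑ t : Fin n, F (ρ t.castSucc) (ρ t.succ)) * E :=
          sum_le_sum fun ρ _ => mul_le_mul_of_nonneg_left (hE _)
            (mul_nonneg (pathWeight_nonneg hπ0 hP0 ρ) (Real.exp_pos _).le)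
      _ ≤ E ^ n * E := by
          rw [← sum_mul]
          exact mul_le_mul_of_nonneg_right (sum_pathWeight_mul_exp_le hπ0 hπ1 hP0 F hE n) hE0

lemma sum_succ_eq_of_eq_add_mulVec {P : Matrix S S ℝ} {h u : S → ℝ} (hu : u = h + P *ᵥ u)
    {n : ℕ} (ω : Fin (n + 1) → S) :
    ∑ t : Fin n, h (ω t.succ) = ∑ t : Fin n, (u (ω t.succ) - (P *ᵥ u) (ω t.castSucc)) +
      ((P *ᵥ u) (ω 0) - (P *ᵥ u) (ω (Fin.last n))) := by
  have htel := Fin.sum_univ_succ_sub_castSucc fun t => (P *ᵥ u) (ω t)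
  rw [eq_sub_of_add_eq hu.symm]
  simp only [Pi.sub_apply, sum_sub_distrib] at htel ⊢
  linarith

end Path

section Oscillation

variable {S : Type*} [Fintype S]

lemma exists_forall_mem_Icc_of_forall_sub_le [Nonempty S] {f : S → ℝ} {δ : ℝ}
    (hf : ∀ y y', f y - f y' ≤ δ) : ∃ a, ∀ y, f y ∈ Set.Icc a (a + δ) := by
  obtain ⟨y₀, hy₀⟩ := Finite.exists_min f
  exact ⟨f y₀, fun y => ⟨hy₀ y, by linarith [hf y y₀]⟩⟩

lemma mulVec_sub_mulVec_le {Q : Matrix S S ℝ} {r δ : ℝ} {f : S → ℝ}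
    (hQ0 : ∀ x y, 0 ≤ Q x y) (hQ1 : ∀ x, ∑ y, Q x y = r) (hf : ∀ y y', f y - f y' ≤ δ)
    (x x' : S) : (Q *ᵥ f) x - (Q *ᵥ f) x' ≤ r * δ := by
  have : Nonempty S := ⟨x⟩
  obtain ⟨a, ha⟩ := exists_forall_mem_Icc_of_forall_sub_le hf
  have hshift (z : S) : (Q *ᵥ f) z = ∑ y, Q z y * (f y - a) + r * a := by
    simp only [mulVec, dotProduct, mul_sub, sum_sub_distrib, ← sum_mul, hQ1]
    ring
  have hupper : ∑ y, Q x y * (f y - a) ≤ r * δ := by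
    rw [← hQ1 x, sum_mul]
    exact sum_le_sum fun y _ => mul_le_mul_of_nonneg_left (by linarith [(ha y).2]) (hQ0 x y)
  have hlower : 0 ≤ ∑ y, Q x' y * (f y - a) :=
    sum_nonneg fun y _ => mul_nonneg (hQ0 x' y) (by linarith [(ha y).1])
  rw [hshift, hshift]
  linarith

lemma abs_le_of_dotProduct_eq_zero {π v : S → ℝ} (hπ0 : ∀ x, 0 ≤ π x) (hπ1 : ∑ x, π x = 1)
    (hv : π ⬝ᵥ v = 0) {B : ℝ} (hosc : ∀ x x', v x - v x' ≤ B) (x : S) : |v x| ≤ B := by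
  have hcenter : v x = ∑ z, π z * (v x - v z) := by
    simp only [mul_sub, sum_sub_distrib, ← sum_mul, hπ1, one_mul]
    rw [← dotProduct, hv, sub_zero]
  have hweighted (f : S → ℝ) (hf : ∀ z, f z ≤ B) : ∑ z, π z * f z ≤ B :=
    calc ∑ z, π z * f z ≤ ∑ z, π z * B :=
          sum_le_sum fun z _ => mul_le_mul_of_nonneg_left (hf z) (hπ0 z)
      _ = B := by rw [← sum_mul, hπ1, one_mul]
  rw [abs_le]
  constructor
  · have := hweighted (fun z => v z - v x) fun z => hosc z x
    simp only [mul_sub, sum_sub_distrib] at this hcenter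
    linarith
  · rw [hcenter]
    exact hweighted _ fun z => hosc x z

variable [DecidableEq S]

lemma mulVec_sub_mulVec_le_of_mem_rowStochastic {P : Matrix S S ℝ} (hP : P ∈ rowStochastic ℝ S)
    {δ : ℝ} {f : S → ℝ} (hf : ∀ y y', f y - f y' ≤ δ) (x x' : S) :
    (P *ᵥ f) x - (P *ᵥ f) x' ≤ δ := by
  simpa using mulVec_sub_mulVec_le (fun _ _ => nonneg_of_mem_rowStochastic hP)
    (sum_row_of_mem_rowStochastic hP) hf x x'

lemma pow_mulVec_sub_mulVec_le {P : Matrix S S ℝ} (hP : P ∈ rowStochastic ℝ S)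
    {φ : S → ℝ} (hφ1 : ∑ y, φ y = 1) {lam : ℝ} {m : ℕ}
    (hminor : ∀ x y, lam * φ y ≤ (P ^ m) x y) {δ : ℝ} {f : S → ℝ}
    (hf : ∀ y y', f y - f y' ≤ δ) (k : ℕ) (x x' : S) :
    (P ^ k *ᵥ f) x - (P ^ k *ᵥ f) x' ≤ (1 - lam) ^ (k / m) * δ := by
  set Q : Matrix S S ℝ := P ^ m - of fun _ y => lam * φ y
  have hQ (g : S → ℝ) (z z' : S) :
      (Q *ᵥ g) z - (Q *ᵥ g) z' = (P ^ m *ᵥ g) z - (P ^ m *ᵥ g) z' := by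
    have hconst : ((of fun _ y => lam * φ y) *ᵥ g) z = ((of fun _ y => lam * φ y) *ᵥ g) z' := rfl
    rw [sub_mulVec, Pi.sub_apply, Pi.sub_apply, hconst]
    ring
  have hblocks (q : ℕ) :
      ∀ y y', ((P ^ m) ^ q *ᵥ f) y - ((P ^ m) ^ q *ᵥ f) y' ≤ (1 - lam) ^ q * δ := by
    induction q with
    | zero => simpa using hf
    | succ q ih =>
      intro y y'
      rw [pow_succ', ← mulVec_mulVec, ← hQ, pow_succ', mul_assoc]
      refine mulVec_sub_mulVec_le (fun z w => ?_) (fun z => ?_) ih y y'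
      · simpa [Q] using hminor z w
      · simp [Q, sum_row_of_mem_rowStochastic (pow_mem hP m), ← mul_sum, hφ1]
  rw [← Nat.mod_add_div k m, pow_add, pow_mul, ← mulVec_mulVec, Nat.mod_add_div]
  exact mulVec_sub_mulVec_le_of_mem_rowStochastic (pow_mem hP _) (hblocks _) x x'

lemma le_one_of_mul_le_pow_apply [Nonempty S] {P : Matrix S S ℝ} (hP : P ∈ rowStochastic ℝ S)
    {φ : S → ℝ} (hφ1 : ∑ y, φ y = 1) {lam : ℝ} {m : ℕ}
    (hminor : ∀ x y, lam * φ y ≤ (P ^ m) x y) : lam ≤ 1 := by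
  obtain ⟨x⟩ := ‹Nonempty S›
  calc lam = ∑ y, lam * φ y := by rw [← mul_sum, hφ1, mul_one]
    _ ≤ ∑ y, (P ^ m) x y := sum_le_sum fun y _ => hminor x y
    _ = 1 := sum_row_of_mem_rowStochastic (pow_mem hP m) x

lemma vecMul_pow_eq_self {π : S → ℝ} {P : Matrix S S ℝ} (hπ : π ᵥ* P = π) (k : ℕ) :
    π ᵥ* P ^ k = π := by
  induction k with
  | zero => simp
  | succ k ih => rw [pow_succ, ← vecMul_vecMul, ih, hπ]

lemma exists_poisson_solution [Nonempty S] {P : Matrix S S ℝ} (hP : P ∈ rowStochastic ℝ S)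
    {φ : S → ℝ} (hφ1 : ∑ y, φ y = 1) {lam : ℝ} (hlam : 0 < lam) {m : ℕ} [NeZero m]
    (hminor : ∀ x y, lam * φ y ≤ (P ^ m) x y) {π : S → ℝ} (hπ0 : ∀ x, 0 ≤ π x)
    (hπ1 : ∑ x, π x = 1) (hπ : π ᵥ* P = π) {h : S → ℝ} (hh : π ⬝ᵥ h = 0) {δ : ℝ}
    (hosc : ∀ y y', h y - h y' ≤ δ) :
    ∃ u : S → ℝ, u = h + P *ᵥ u ∧ ∀ x x', u x - u x' ≤ m / lam * δ := by
  have hlam1 := le_one_of_mul_le_pow_apply hP hφ1 hminor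
  have hgeom : HasSum (fun k : ℕ => (1 - lam) ^ (k / m) * δ) (m / lam * δ) := by
    simpa [div_eq_mul_inv] using
      (hasSum_pow_div (r := 1 - lam) (by linarith) (by linarith) m).mul_right δ
  have hdiff (k : ℕ) := pow_mulVec_sub_mulVec_le hP hφ1 hminor hosc k
  have hbound (k : ℕ) (x : S) : ‖(P ^ k *ᵥ h) x‖ ≤ (1 - lam) ^ (k / m) * δ := by
    refine abs_le_of_dotProduct_eq_zero hπ0 hπ1 ?_ (hdiff k) x
    rw [dotProduct_mulVec, vecMul_pow_eq_self hπ, hh]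
  have hsumm (x : S) : Summable fun k => (P ^ k *ᵥ h) x :=
    Summable.of_norm_bounded hgeom.summable (hbound · x)
  refine ⟨fun x => ∑' k, (P ^ k *ᵥ h) x, funext fun x => ?_, fun x x' => ?_⟩
  · rw [(hsumm x).tsum_eq_zero_add, Pi.add_apply]
    congr 1
    · simp
    · simp only [pow_succ', ← mulVec_mulVec]
      change ∑' k, ∑ y, P x y * (P ^ k *ᵥ h) y = ∑ y, P x y * ∑' k, (P ^ k *ᵥ h) y
      rw [Summable.tsum_finsetSum fun y _ => (hsumm y).mul_left _]
      simp only [tsum_mul_left]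
  · exact hasSum_le (fun k => hdiff k x x') ((hsumm x).hasSum.sub (hsumm x').hasSum) hgeom

lemma sum_mul_exp_sub_mulVec_le [Nonempty S] {P : Matrix S S ℝ} (hP : P ∈ rowStochastic ℝ S)
    {u : S → ℝ} {δ : ℝ} (hu : ∀ y y', u y - u y' ≤ δ) (s : ℝ) (x : S) :
    ∑ y, P x y * Real.exp (s * (u y - (P *ᵥ u) x)) ≤ Real.exp (s ^ 2 * δ ^ 2 / 8) := by
  obtain ⟨a, ha⟩ := exists_forall_mem_Icc_of_forall_sub_le hu
  have hmean : ∑ y, P x y * (u y - (P *ᵥ u) x) = 0 := by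
    simp only [mul_sub, sum_sub_distrib, ← sum_mul, sum_row_of_mem_rowStochastic hP, one_mul]
    exact sub_self _
  convert sum_mul_exp_le_of_mem_Icc (fun y => nonneg_of_mem_rowStochastic hP)
    (sum_row_of_mem_rowStochastic hP x) (fun y => ⟨sub_le_sub_right (ha y).1 ((P *ᵥ u) x),
      sub_le_sub_right (ha y).2 ((P *ᵥ u) x)⟩) hmean s using 3
  ring

lemma sum_pathWeight_mul_exp_sum_sub_mulVec_le [Nonempty S] {π : S → ℝ} (hπ0 : ∀ x, 0 ≤ π x)
    (hπ1 : ∑ x, π x = 1) {P : Matrix S S ℝ} (hP : P ∈ rowStochastic ℝ S) {u : S → ℝ} {δ : ℝ}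
    (hu : ∀ y y', u y - u y' ≤ δ) (s : ℝ) (n : ℕ) :
    ∑ ω : Fin (n + 1) → S, pathWeight π P ω *
      Real.exp (s * ∑ t : Fin n, (u (ω t.succ) - (P *ᵥ u) (ω t.castSucc))) ≤
      Real.exp (s ^ 2 * δ ^ 2 / 8) ^ n := by
  simpa only [mul_sum] using sum_pathWeight_mul_exp_le hπ0 hπ1
    (fun _ _ => nonneg_of_mem_rowStochastic hP) _ (sum_mul_exp_sub_mulVec_le hP hu s) n

lemma sub_le_abs_sum_sub_mulVec {P : Matrix S S ℝ} (hP : P ∈ rowStochastic ℝ S) {g u : S → ℝ}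
    {μ δ ε : ℝ} (hu : u = (fun y => g y - μ) + P *ᵥ u) (hosc : ∀ x x', u x - u x' ≤ δ)
    {n : ℕ} (hn : (0 : ℝ) < n) (ω : Fin (n + 1) → S)
    (hω : ε ≤ |1 / (n : ℝ) * ∑ t : Fin n, g (ω t.succ) - μ|) :
    n * ε - δ ≤ |∑ t : Fin n, (u (ω t.succ) - (P *ᵥ u) (ω t.castSucc))| := by
  have hsum := sum_succ_eq_of_eq_add_mulVec hu ω
  rw [sum_sub_distrib, sum_const, card_univ, Fintype.card_fin, nsmul_eq_mul] at hsum
  have hmean : 1 / (n : ℝ) * ∑ t : Fin n, g (ω t.succ) - μ =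
      (∑ t : Fin n, (u (ω t.succ) - (P *ᵥ u) (ω t.castSucc)) +
        ((P *ᵥ u) (ω 0) - (P *ᵥ u) (ω (Fin.last n)))) / n := by
    rw [← hsum]
    field_simp
  have hPu := mulVec_sub_mulVec_le_of_mem_rowStochastic hP hosc
  have hdrift : |(P *ᵥ u) (ω 0) - (P *ᵥ u) (ω (Fin.last n))| ≤ δ :=
    abs_le.2 ⟨by linarith [hPu (ω (Fin.last n)) (ω 0)], hPu _ _⟩
  rw [hmean, abs_div, abs_of_pos hn, le_div_iff₀ hn] at hω
  linarith [abs_add_le (∑ t : Fin n, (u (ω t.succ) - (P *ᵥ u) (ω t.castSucc)))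
    ((P *ᵥ u) (ω 0) - (P *ᵥ u) (ω (Fin.last n)))]

end Oscillation

theorem stmt_4_general
    {S : Type} [Fintype S] [Nonempty S] [DecidableEq S]
    (P : Matrix S S ℝ) (hP0 : ∀ x y, 0 ≤ P x y) (hP1 : ∀ x, ∑ y, P x y = 1)
    (π : S → ℝ) (hπ0 : ∀ x, 0 ≤ π x) (hπ1 : ∑ x, π x = 1)
    (hπstat : ∀ y, ∑ x, π x * P x y = π y)
    -- (A.3): minorization condition
    (φ : S → ℝ) (hφ1 : ∑ y, φ y = 1)
    (lam : ℝ) (hlam : 0 < lam)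
    (m : ℕ) (hm : 1 ≤ m)
    (hminor : ∀ x y, lam * φ y ≤ (P ^ m) x y)
    -- the function g and its sup-norm
    (g : S → ℝ) (gnorm : ℝ)
    (hgnorm : IsGreatest {r : ℝ | ∃ x, r = |g x|} gnorm) (hgpos : 0 < gnorm)
    (ε : ℝ) (hε : 0 < ε)
    (T : ℕ) (hT : 2 * gnorm * m / (lam * ε) < (T : ℝ))
    -- the stationary chain of length T+1, with states X_0, X_1, ..., X_T
    (prob : (Fin (T + 1) → S) → ℝ)
    (hprob : ∀ X, prob X = π (X 0) * ∏ t : Fin T, P (X t.castSucc) (X t.succ)) :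
    -- P(|S_T − E_π g| ≥ ε) ≤ 2·exp(−λ²(Tε − 2‖g‖m/λ)²/(2T‖g‖²m²)),
    -- where S_T = (1/T)·Σ_{t=1}^T g(X_t)
    (∑ X, ({X' | ε ≤ |(1 / (T : ℝ)) * (∑ t : Fin T, g (X' t.succ)) - ∑ x, π x * g x|} :
        Set (Fin (T + 1) → S)).indicator prob X)
      ≤ 2 * Real.exp (-(lam ^ 2 * ((T : ℝ) * ε - 2 * gnorm * m / lam) ^ 2) /
          (2 * (T : ℝ) * gnorm ^ 2 * (m : ℝ) ^ 2)) := by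
  have hP : P ∈ rowStochastic ℝ S := mem_rowStochastic_iff_sum.2 ⟨hP0, hP1⟩
  have : NeZero m := ⟨by omega⟩
  have hT0 : (0 : ℝ) < T := lt_of_le_of_lt (by positivity) hT
  set δ := m / lam * (2 * gnorm) with hδ
  have ha : 0 < T * ε - δ := by
    rw [div_lt_iff₀ (by positivity)] at hT
    rw [sub_pos, show δ = 2 * gnorm * m / lam by ring, div_lt_iff₀ hlam]
    linarith
  have hgosc (y y' : S) : (g y - π ⬝ᵥ g) - (g y' - π ⬝ᵥ g) ≤ 2 * gnorm := by
    linarith [abs_le.1 (hgnorm.2 ⟨y, rfl⟩), abs_le.1 (hgnorm.2 ⟨y', rfl⟩)]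
  obtain ⟨u, hu, hosc⟩ := exists_poisson_solution hP hφ1 hlam hminor hπ0 hπ1 (funext hπstat)
    (by simp [dotProduct, mul_sub, sum_sub_distrib, ← sum_mul, hπ1]) hgosc
  rw [show prob = pathWeight π P from funext hprob]
  -- the minimizer of the Chernoff exponent `T s² δ² / 8 - s (T ε - δ)`
  set s := (T * ε - δ) / (T * δ ^ 2 / 4) with hs
  calc _ ≤ _ := sum_indicator_le_exp_mul (pathWeight_nonneg hπ0 hP0)
        (fun ω hω => sub_le_abs_sum_sub_mulVec hP hu hosc hT0 ω hω) (s := s)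
        (div_nonneg ha.le (by positivity))
    _ ≤ (Real.exp (s ^ 2 * δ ^ 2 / 8) ^ T + Real.exp ((-s) ^ 2 * δ ^ 2 / 8) ^ T) *
          Real.exp (-(s * (T * ε - δ))) := by
      gcongr
      exacts [sum_pathWeight_mul_exp_sum_sub_mulVec_le hπ0 hπ1 hP hosc s T,
        sum_pathWeight_mul_exp_sum_sub_mulVec_le hπ0 hπ1 hP hosc (-s) T]
    _ = _ := by
      rw [neg_sq, ← two_mul, ← Real.exp_nat_mul, mul_assoc, ← Real.exp_add]
      congr 2
      rw [hs, hδ]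
      field_simp
      ring

/-- Hoeffding inequality for uniformly ergodic Markov chains
(Glynn–Ormoneit), for a stationary finite-state chain `X_0, X_1, ..., X_T` with
transition matrix `P` satisfying the minorization condition `(P^m)(x,·) ≥ λ·φ(·)`. -/
theorem stmt_4
    {S : Type} [Fintype S] [Nonempty S] [DecidableEq S]
    (P : Matrix S S ℝ) (hP0 : ∀ x y, 0 ≤ P x y) (hP1 : ∀ x, ∑ y, P x y = 1)
    (π : S → ℝ) (hπ0 : ∀ x, 0 ≤ π x) (hπ1 : ∑ x, π x = 1)
    (hπstat : ∀ y, ∑ x, π x * P x y = π y)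
    -- (A.3): minorization condition
    (φ : S → ℝ) (hφ0 : ∀ y, 0 ≤ φ y) (hφ1 : ∑ y, φ y = 1)
    (lam : ℝ) (hlam : 0 < lam)
    (m : ℕ) (hm : 1 ≤ m)
    (hminor : ∀ x y, lam * φ y ≤ (P ^ m) x y)
    -- the function g and its sup-norm
    (g : S → ℝ) (gnorm : ℝ)
    (hgnorm : IsGreatest {r : ℝ | ∃ x, r = |g x|} gnorm) (hgpos : 0 < gnorm)
    (ε : ℝ) (hε : 0 < ε)
    (T : ℕ) (hT : 2 * gnorm * m / (lam * ε) < (T : ℝ))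
    -- the stationary chain of length T+1, with states X_0, X_1, ..., X_T
    (prob : (Fin (T + 1) → S) → ℝ)
    (hprob : ∀ X, prob X = π (X 0) * ∏ t : Fin T, P (X t.castSucc) (X t.succ)) :
    -- P(|S_T − E_π g| ≥ ε) ≤ 2·exp(−λ²(Tε − 2‖g‖m/λ)²/(2T‖g‖²m²)),
    -- where S_T = (1/T)·Σ_{t=1}^T g(X_t)
    (∑ X, ({X' | ε ≤ |(1 / (T : ℝ)) * (∑ t : Fin T, g (X' t.succ)) - ∑ x, π x * g x|} :
        Set (Fin (T + 1) → S)).indicator prob X)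
      ≤ 2 * Real.exp (-(lam ^ 2 * ((T : ℝ) * ε - 2 * gnorm * m / lam) ^ 2) /
          (2 * (T : ℝ) * gnorm ^ 2 * (m : ℝ) ^ 2)) :=
  stmt_4_general P hP0 hP1 π hπ0 hπ1 hπstat φ hφ1 lam hlam m hm hminor g gnorm hgnorm hgpos ε hε T
    hT prob hprob
end

section
/- (Covering-number plus Hoeffding bound for the symmetrized block process.) Let T = 2τm for positive integers τ, m. Let μ̃ be any probability measure on S^m, let z̃^{(1)}, ..., z̃^{(τ)} be independent S^m-valued random blocks each with law μ̃, and let σ_1, ..., σ_τ be independent Rademacher random variables (P(σ_j = 1) = P(σ_j = −1) = 1/2) independent of the blocks. Then for every ε > 0, P( sup_{f∈F} |(1/τ)·Σ_{j=1}^τ σ_j·Σ_{t=1}^m ℓ_f(z̃^{(j)}_t)| ≥ mε/4 ) ≤ 2·N(ε/16, ℓ∘F, T)·exp(−ε²τ/(128B'²)), where z̃^{(j)}_t denotes the t-th coordinate of the block z̃^{(j)}. -/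
/-!
Conditionally on the blocks only the `τm` sample points matter, so `F` may be replaced by an
`ε/16`-cover `G` on them of size at most `N(ε/16, ℓ∘F, T)` (pad the sample to length `T`).
Passing from `f` to its cover element moves the signed block sum by at most `τmε/16`, so the
event forces `|Σ_j σ_j Σ_t ℓ_g(z̃^{(j)}_t)| ≥ τmε/8` for some `g ∈ G`. For fixed `g` and fixed
blocks this has probability at most `2 exp(-ε²τ/(128B'²))` by Hoeffding's inequality for
Rademacher sums with summands bounded by `mB'`; a union bound over `G` and averaging over the
blocks finish the proof.
-/

open Finset Real

section Rademacher

variable {ι : Type*} [Fintype ι]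

def signedSum (σ : ι → Bool) (a : ι → ℝ) : ℝ := ∑ j, (if σ j then 1 else -1) * a j

lemma signedSum_neg (σ : ι → Bool) (a : ι → ℝ) : signedSum σ (-a) = -signedSum σ a := by
  simp [signedSum, ← sum_neg_distrib]

lemma abs_signedSum_sub_le (σ : ι → Bool) (a b : ι → ℝ) :
    |signedSum σ a - signedSum σ b| ≤ ∑ j, |a j - b j| := by
  rw [signedSum, signedSum, ← sum_sub_distrib]
  refine (abs_sum_le_sum_abs _ _).trans (sum_le_sum fun j _ => ?_)
  rw [← mul_sub, abs_mul]
  split_ifs <;> simp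

variable [DecidableEq ι]

lemma sum_exp_mul_signedSum (a : ι → ℝ) (s : ℝ) :
    ∑ σ : ι → Bool, exp (s * signedSum σ a) = 2 ^ Fintype.card ι * ∏ j, cosh (s * a j) := by
  have hprod := Fintype.prod_sum fun j (b : Bool) => exp (s * ((if b then 1 else -1) * a j))
  beta_reduce at hprod
  simp_rw [signedSum, mul_sum, exp_sum, ← hprod, ← card_univ, ← prod_const (2 : ℝ),
    ← prod_mul_distrib]
  refine prod_congr rfl fun j _ => ?_
  rw [Fintype.sum_bool, cosh_eq]
  simp only [if_true, Bool.false_eq_true, if_false]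
  ring_nf

lemma cosh_mul_le_exp {s a M : ℝ} (ha : |a| ≤ M) : cosh (s * a) ≤ exp (s ^ 2 * M ^ 2 / 2) := by
  refine (cosh_le_exp_half_sq _).trans (exp_le_exp.2 ?_)
  have : a ^ 2 ≤ M ^ 2 := sq_le_sq' (abs_le.1 ha).1 (abs_le.1 ha).2
  nlinarith [sq_nonneg s]

/-- Hoeffding's inequality for Rademacher sums, counted over sign patterns. -/
lemma card_le_signedSum_le (a : ι → ℝ) {M c : ℝ} (hM : 0 < M) (hc : 0 ≤ c)
    (ha : ∀ j, |a j| ≤ M) :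
    (#{σ | c ≤ signedSum σ a} : ℝ) ≤
      2 ^ Fintype.card ι * exp (-c ^ 2 / (2 * Fintype.card ι * M ^ 2)) := by
  set n := Fintype.card ι
  -- the Chernoff parameter minimising `-s c + n s² M² / 2`
  set s := c / (n * M ^ 2)
  have hs : 0 ≤ s := by positivity
  have hchernoff : ∀ σ : ι → Bool, (if c ≤ signedSum σ a then (1 : ℝ) else 0) ≤
      exp (-(s * c)) * exp (s * signedSum σ a) := by
    intro σ
    rw [← exp_add]
    split_ifs with h
    · exact one_le_exp (by nlinarith)
    · positivity
  calc (#{σ | c ≤ signedSum σ a} : ℝ)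
      = ∑ σ, if c ≤ signedSum σ a then (1 : ℝ) else 0 := natCast_card_filter _ _
    _ ≤ ∑ σ, exp (-(s * c)) * exp (s * signedSum σ a) := sum_le_sum fun σ _ => hchernoff σ
    _ = exp (-(s * c)) * (2 ^ n * ∏ j, cosh (s * a j)) := by
      rw [← mul_sum, sum_exp_mul_signedSum]
    _ ≤ exp (-(s * c)) * (2 ^ n * ∏ _j : ι, exp (s ^ 2 * M ^ 2 / 2)) := by
      gcongr with j
      exact cosh_mul_le_exp (ha j)
    _ = 2 ^ n * exp (-(s * c) + n * (s ^ 2 * M ^ 2 / 2)) := by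
      rw [prod_const, card_univ, ← exp_nat_mul, exp_add]
      ring
    _ = 2 ^ n * exp (-c ^ 2 / (2 * n * M ^ 2)) := by
      obtain hn | hn := (Nat.cast_nonneg (α := ℝ) n).eq_or_lt
      · simp [s, ← hn]
      · congr 2
        simp only [s]
        field_simp
        ring

lemma half_pow_mul_card_le_abs_signedSum_le (a : ι → ℝ) {M c : ℝ} (hM : 0 < M) (hc : 0 ≤ c)
    (ha : ∀ j, |a j| ≤ M) :
    (1 / 2) ^ Fintype.card ι * (#{σ | c ≤ |signedSum σ a|} : ℝ) ≤
      2 * exp (-c ^ 2 / (2 * Fintype.card ι * M ^ 2)) := by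
  have hsub : ({σ | c ≤ |signedSum σ a|} : Finset (ι → Bool)) ⊆
      ({σ | c ≤ signedSum σ a} : Finset (ι → Bool)) ∪ ({σ | c ≤ signedSum σ (-a)} : Finset _) := by
    intro σ
    simp only [mem_filter, mem_univ, true_and, mem_union, signedSum_neg]
    intro h
    rcases le_abs'.1 h with h | h
    · exact Or.inr (by linarith)
    · exact Or.inl h
  have hneg : ∀ j, |(-a) j| ≤ M := fun j => by simpa using ha j
  have hcard : (#{σ | c ≤ |signedSum σ a|} : ℝ) ≤
      #{σ | c ≤ signedSum σ a} + #{σ | c ≤ signedSum σ (-a)} := by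
    exact_mod_cast (card_le_card hsub).trans (card_union_le _ _)
  calc (1 / 2) ^ Fintype.card ι * (#{σ | c ≤ |signedSum σ a|} : ℝ)
      ≤ (1 / 2) ^ Fintype.card ι * (2 * (2 ^ Fintype.card ι *
          exp (-c ^ 2 / (2 * Fintype.card ι * M ^ 2)))) := by
        gcongr
        linarith [card_le_signedSum_le a hM hc ha, card_le_signedSum_le (-a) hM hc hneg]
    _ = 2 * exp (-c ^ 2 / (2 * Fintype.card ι * M ^ 2)) := by
        rw [one_div_pow]
        field_simp

end Rademacher

section Covering

variable {S F : Type*}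

def IsEmpiricalCover {ι : Type*} (ℓ : F → S → ℝ) (δ : ℝ) (zs : ι → S) (G : Finset F) : Prop :=
  ∀ f, ∃ g ∈ G, ∀ t, |ℓ f (zs t) - ℓ g (zs t)| ≤ δ

lemma IsEmpiricalCover.comp {ι κ : Type*} {ℓ : F → S → ℝ} {δ : ℝ} {zs : ι → S} {G : Finset F}
    (h : IsEmpiricalCover ℓ δ zs G) (e : κ → ι) : IsEmpiricalCover ℓ δ (zs ∘ e) G :=
  fun f => (h f).imp fun _ ⟨hg, hfg⟩ => ⟨hg, fun t => hfg (e t)⟩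

lemma exists_isEmpiricalCover_of_isBounded [Fintype S] {ι : Type*} (ℓ : F → S → ℝ)
    (hℓ : Bornology.IsBounded (Set.range ℓ)) {δ : ℝ} (hδ : 0 < δ) (zs : ι → S) :
    ∃ G, IsEmpiricalCover ℓ δ zs G := by
  obtain ⟨N, hN, hNfin, hcov⟩ := Metric.finite_approx_of_totallyBounded
    (hℓ.isCompact_closure.totallyBounded.subset subset_closure) δ hδ
  rw [← Set.image_univ] at hN hcov
  obtain ⟨G, -, hGfin, hGcov⟩ := Set.exists_subset_image_finite_and
    (p := fun N => ℓ '' Set.univ ⊆ ⋃ y ∈ N, Metric.ball y δ) |>.1 ⟨N, hN, hNfin, hcov⟩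
  refine ⟨hGfin.toFinset, fun f => ?_⟩
  obtain ⟨_, ⟨g, hg, rfl⟩, hfg⟩ :=
    Set.mem_iUnion₂.1 (hGcov (Set.mem_image_of_mem ℓ (Set.mem_univ f)))
  refine ⟨g, hGfin.mem_toFinset.2 hg, fun t => ?_⟩
  rw [← Real.dist_eq]
  exact (dist_le_pi_dist _ _ _).trans (Metric.mem_ball.1 hfg).le

lemma exists_mem_le_of_mem_upperBounds {X : Type*} {C : X → Set ℕ} {N : ℕ}
    (hN : N ∈ upperBounds {n | ∃ x, IsLeast (C x) n}) {x : X} (hx : (C x).Nonempty) :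
    ∃ c ∈ C x, c ≤ N :=
  ⟨sInf (C x), Nat.sInf_mem hx, hN ⟨x, Nat.sInf_mem hx, fun _ h => Nat.sInf_le h⟩⟩

lemma exists_comp_eq_of_card_le {κ : Type*} [Fintype κ] [Nonempty S] {T : ℕ} (z : κ → S)
    (h : Fintype.card κ ≤ T) : ∃ (zs : Fin T → S) (e : κ → Fin T), zs ∘ e = z := by
  have he : Function.Injective (Fin.castLE h ∘ Fintype.equivFin κ) :=
    (Fin.castLE_injective h).comp (Fintype.equivFin κ).injective
  exact ⟨_, _, Function.extend_comp he z fun _ => Classical.arbitrary S⟩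

lemma exists_isEmpiricalCover_card_le [Fintype S] [Nonempty S] {κ : Type*} [Fintype κ]
    {ℓ : F → S → ℝ} (hℓ : Bornology.IsBounded (Set.range ℓ)) {δ : ℝ} (hδ : 0 < δ) {T N : ℕ}
    (hN : N ∈ upperBounds {n | ∃ zs : Fin T → S,
      IsLeast {c | ∃ G : Finset F, G.card = c ∧ IsEmpiricalCover ℓ δ zs G} n})
    (z : κ → S) (hκ : Fintype.card κ ≤ T) :
    ∃ G : Finset F, G.card ≤ N ∧ IsEmpiricalCover ℓ δ z G := by
  obtain ⟨zs, e, rfl⟩ := exists_comp_eq_of_card_le z hκ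
  obtain ⟨G, hG⟩ := exists_isEmpiricalCover_of_isBounded ℓ hℓ hδ zs
  obtain ⟨_, ⟨G', rfl, hG'⟩, hle⟩ := exists_mem_le_of_mem_upperBounds hN ⟨_, G, rfl, hG⟩
  exact ⟨G', hle, hG'.comp e⟩

end Covering

section Symmetrization

variable {S F ι κ : Type*} [Fintype ι] [Fintype κ]

lemma abs_sum_le_card_mul {x : κ → ℝ} {δ : ℝ} (h : ∀ t, |x t| ≤ δ) :
    |∑ t, x t| ≤ Fintype.card κ * δ := by
  simpa using (abs_sum_le_sum_abs x univ).trans (sum_le_card_nsmul univ _ δ fun t _ => h t)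

lemma abs_signedSum_sum_sub_le (σ : ι → Bool) (u v : ι → κ → ℝ) {δ : ℝ}
    (h : ∀ j t, |u j t - v j t| ≤ δ) :
    |signedSum σ (fun j => ∑ t, u j t) - signedSum σ (fun j => ∑ t, v j t)| ≤
      Fintype.card ι * (Fintype.card κ * δ) := by
  have hblock : ∀ j, |∑ t, u j t - ∑ t, v j t| ≤ Fintype.card κ * δ := fun j => by
    rw [← sum_sub_distrib]
    exact abs_sum_le_card_mul (h j)
  simpa using (abs_signedSum_sub_le σ _ _).trans (sum_le_card_nsmul univ _ _ fun j _ => hblock j)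

lemma exists_mem_le_abs_signedSum_of_le_iSup [Nonempty ι] [Nonempty κ] {ℓ : F → S → ℝ} {δ : ℝ}
    (hδ : 0 < δ) {z : ι → κ → S} {G : Finset F}
    (hG : IsEmpiricalCover ℓ δ (fun p : ι × κ => z p.1 p.2) G) {σ : ι → Bool}
    (h : 4 * Fintype.card κ * δ ≤
      ⨆ f, |(1 / Fintype.card ι : ℝ) * signedSum σ fun j => ∑ t, ℓ f (z j t)|) :
    ∃ g ∈ G, 2 * Fintype.card ι * Fintype.card κ * δ ≤
      |signedSum σ fun j => ∑ t, ℓ g (z j t)| := by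
  have hι : (0 : ℝ) < Fintype.card ι := by exact_mod_cast Fintype.card_pos
  have hκ : (0 : ℝ) < Fintype.card κ := by exact_mod_cast Fintype.card_pos
  have hlt : 3 * Fintype.card κ * δ < 4 * Fintype.card κ * δ := by nlinarith
  obtain ⟨f, hf⟩ : ∃ f, 3 * Fintype.card κ * δ <
      |(1 / Fintype.card ι : ℝ) * signedSum σ fun j => ∑ t, ℓ f (z j t)| := by
    cases isEmpty_or_nonempty F
    · rw [Real.iSup_of_isEmpty] at h
      nlinarith
    · exact exists_lt_of_lt_ciSup (hlt.trans_le h)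
  obtain ⟨g, hg, hfg⟩ := hG f
  refine ⟨g, hg, ?_⟩
  rw [abs_mul, abs_of_pos (by positivity), one_div, inv_mul_eq_div, lt_div_iff₀ hι] at hf
  have := abs_signedSum_sum_sub_le σ (fun j t => ℓ f (z j t)) (fun j t => ℓ g (z j t))
    fun j t => hfg (j, t)
  have := abs_sub_abs_le_abs_sub (signedSum σ fun j => ∑ t, ℓ f (z j t))
    (signedSum σ fun j => ∑ t, ℓ g (z j t))
  nlinarith

lemma half_pow_mul_card_le_iSup_abs_signedSum_le [DecidableEq ι] [Nonempty ι] [Nonempty κ]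
    {ℓ : F → S → ℝ} {B δ : ℝ} (hB : 0 < B) (hℓ : ∀ f s, |ℓ f s| ≤ B) (hδ : 0 < δ) {z : ι → κ → S}
    {G : Finset F} (hG : IsEmpiricalCover ℓ δ (fun p : ι × κ => z p.1 p.2) G) :
    (1 / 2) ^ Fintype.card ι * (#{σ | 4 * Fintype.card κ * δ ≤
        ⨆ f, |(1 / Fintype.card ι : ℝ) * signedSum σ fun j => ∑ t, ℓ f (z j t)|} : ℝ) ≤
      #G * (2 * exp (-(2 * Fintype.card ι * δ ^ 2 / B ^ 2))) := by
  set n := Fintype.card ι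
  set m := Fintype.card κ
  have hm : (0 : ℝ) < m := by exact_mod_cast Fintype.card_pos
  have hsub : ({σ | 4 * m * δ ≤ ⨆ f, |(1 / n : ℝ) * signedSum σ fun j => ∑ t, ℓ f (z j t)|} :
      Finset (ι → Bool)) ⊆
      G.biUnion fun g => {σ | 2 * n * m * δ ≤ |signedSum σ fun j => ∑ t, ℓ g (z j t)|} := by
    intro σ hσ
    rw [mem_filter] at hσ
    obtain ⟨g, hg, hσg⟩ := exists_mem_le_abs_signedSum_of_le_iSup hδ hG hσ.2
    exact mem_biUnion.2 ⟨g, hg, mem_filter.2 ⟨mem_univ σ, hσg⟩⟩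
  have hbound : ∀ g ∈ G, (1 / 2) ^ n *
      (#{σ | 2 * n * m * δ ≤ |signedSum σ fun j => ∑ t, ℓ g (z j t)|} : ℝ) ≤
        2 * exp (-(2 * n * δ ^ 2 / B ^ 2)) := fun g _ => by
    convert half_pow_mul_card_le_abs_signedSum_le (M := m * B) (c := 2 * n * m * δ) _
      (by positivity) (by positivity) (fun j => abs_sum_le_card_mul fun t => hℓ g (z j t))
      using 4
    field_simp
    ring
  have hunion : (#{σ | 4 * m * δ ≤
      ⨆ f, |(1 / n : ℝ) * signedSum σ fun j => ∑ t, ℓ f (z j t)|} : ℝ) ≤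
        ∑ g ∈ G, (#{σ | 2 * n * m * δ ≤ |signedSum σ fun j => ∑ t, ℓ g (z j t)|} : ℝ) := by
    exact_mod_cast (card_le_card hsub).trans card_biUnion_le
  calc _ ≤ ∑ g ∈ G, (1 / 2) ^ n *
        (#{σ | 2 * n * m * δ ≤ |signedSum σ fun j => ∑ t, ℓ g (z j t)|} : ℝ) := by
        rw [← mul_sum]; gcongr
    _ ≤ _ := by simpa using sum_le_card_nsmul G _ _ hbound

end Symmetrization

open Classical in
lemma sum_indicator_le_of_card_le {α β : Type*} [Fintype α] [Fintype β] (E : Set (α × β))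
    {w : α → ℝ} (hw0 : ∀ a, 0 ≤ w a) (hw1 : ∑ a, w a = 1) {c K : ℝ}
    (hK : ∀ a, c * #{b | (a, b) ∈ E} ≤ K) :
    ∑ p, E.indicator (fun q => w q.1 * c) p ≤ K := by
  have hslice : ∀ a,
      ∑ b, E.indicator (fun q => w q.1 * c) (a, b) = w a * (c * #{b | (a, b) ∈ E}) := by
    intro a
    simp only [Set.indicator_apply, ← sum_filter, sum_const, nsmul_eq_mul]
    ring
  calc ∑ p, E.indicator (fun q => w q.1 * c) p = ∑ a, w a * (c * #{b | (a, b) ∈ E}) := by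
        rw [Fintype.sum_prod_type]; exact sum_congr rfl fun a _ => hslice a
    _ ≤ ∑ a, w a * K := sum_le_sum fun a _ => mul_le_mul_of_nonneg_left (hK a) (hw0 a)
    _ = K := by rw [← sum_mul, hw1, one_mul]

theorem stmt_9_general
    {S : Type} [Fintype S] [Nonempty S]
    -- the function class F and the losses ℓ_f : S → [0, B']
    (B' : ℝ) (hB' : 0 < B')
    (F : Type) (ℓ : F → S → ℝ) (hℓ0 : ∀ f s, 0 ≤ ℓ f s) (hℓB : ∀ f s, ℓ f s ≤ B')
    (m τ' T : ℕ) (hm : 1 ≤ m) (hτ : 1 ≤ τ') (hT : T = 2 * τ' * m)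
    -- μ̃ : an arbitrary probability measure on S^m (law of each block)
    (μ : (Fin m → S) → ℝ) (hμ0 : ∀ Y, 0 ≤ μ Y) (hμ1 : ∑ Y, μ Y = 1)
    (ε : ℝ) (hε : 0 < ε)
    -- Ncov = N(ε/16, ℓ∘F, T)
    (Ncov : ℕ)
    (hNcov : IsGreatest {n : ℕ | ∃ zs : Fin T → S,
      IsLeast {c : ℕ | ∃ G : Finset F, G.card = c ∧
        ∀ f : F, ∃ g ∈ G, ∀ t : Fin T, |ℓ f (zs t) - ℓ g (zs t)| ≤ ε / 16} n} Ncov) :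
    -- the joint law of (blocks, signs) is the product of ∏_j μ̃ and uniform signs;
    -- a sign σ_j = ±1 is encoded by a Boolean
    (∑ p : (Fin τ' → Fin m → S) × (Fin τ' → Bool),
      ({q | (m : ℝ) * ε / 4 ≤ ⨆ f : F,
          |(1 / (τ' : ℝ)) * ∑ j : Fin τ',
            (if q.2 j then (1 : ℝ) else -1) * ∑ t : Fin m, ℓ f (q.1 j t)|} :
        Set ((Fin τ' → Fin m → S) × (Fin τ' → Bool))).indicator
        (fun q => (∏ j, μ (q.1 j)) * (1 / 2) ^ τ') p)
      ≤ 2 * (Ncov : ℝ) * Real.exp (-(ε ^ 2 * (τ' : ℝ)) / (128 * B' ^ 2)) := by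
  classical
  have : NeZero m := ⟨by omega⟩
  have : NeZero τ' := ⟨by omega⟩
  have hbdd : Bornology.IsBounded (Set.range ℓ) :=
    (Metric.isBounded_Icc (0 : S → ℝ) fun _ => B').subset <| Set.range_subset_iff.2 fun f =>
      ⟨fun s => hℓ0 f s, fun s => hℓB f s⟩
  have hℓ : ∀ f s, |ℓ f s| ≤ B' := fun f s => abs_le.2 ⟨by linarith [hℓ0 f s], hℓB f s⟩
  have hw1 : ∑ z : Fin τ' → Fin m → S, ∏ j, μ (z j) = 1 := by
    rw [← Fintype.prod_sum fun _ => μ, hμ1, prod_const_one]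
  refine sum_indicator_le_of_card_le _ (fun z => prod_nonneg fun j _ => hμ0 _) hw1 fun z => ?_
  obtain ⟨G, hGcard, hG⟩ := exists_isEmpiricalCover_card_le hbdd (by positivity : 0 < ε / 16)
    hNcov.2 (fun p : Fin τ' × Fin m => z p.1 p.2) (by simp [hT]; nlinarith)
  have hprob := half_pow_mul_card_le_iSup_abs_signedSum_le hB' hℓ (by positivity) hG
  rw [Fintype.card_fin, Fintype.card_fin, show 4 * (m : ℝ) * (ε / 16) = m * ε / 4 by ring,
    show -(2 * τ' * (ε / 16) ^ 2 / B' ^ 2) = -(ε ^ 2 * τ') / (128 * B' ^ 2) by field_simp; ring]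
    at hprob
  refine hprob.trans ?_
  rw [← mul_assoc, mul_comm (#G : ℝ)]
  gcongr

/-- Covering-number plus Hoeffding bound for the symmetrized block process.
With τ i.i.d. blocks `z̃^{(1)}, ..., z̃^{(τ)} ∈ S^m` of law `μ̃` and independent Rademacher
signs `σ_1, ..., σ_τ`, the probability that
`sup_{f∈F} |(1/τ)·Σ_j σ_j·Σ_t ℓ_f(z̃^{(j)}_t)| ≥ mε/4` is at most
`2·N(ε/16, ℓ∘F, T)·exp(−ε²τ/(128B'²))`, where `T = 2τm`. -/
theorem stmt_9
    {S : Type} [Fintype S] [Nonempty S] [DecidableEq S]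
    -- the function class F and the losses ℓ_f : S → [0, B']
    (B' : ℝ) (hB' : 0 < B')
    (F : Type) (ℓ : F → S → ℝ) (hℓ0 : ∀ f s, 0 ≤ ℓ f s) (hℓB : ∀ f s, ℓ f s ≤ B')
    (m τ' T : ℕ) (hm : 1 ≤ m) (hτ : 1 ≤ τ') (hT : T = 2 * τ' * m)
    -- μ̃ : an arbitrary probability measure on S^m (law of each block)
    (μ : (Fin m → S) → ℝ) (hμ0 : ∀ Y, 0 ≤ μ Y) (hμ1 : ∑ Y, μ Y = 1)
    (ε : ℝ) (hε : 0 < ε)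
    -- Ncov = N(ε/16, ℓ∘F, T)
    (Ncov : ℕ)
    (hNcov : IsGreatest {n : ℕ | ∃ zs : Fin T → S,
      IsLeast {c : ℕ | ∃ G : Finset F, G.card = c ∧
        ∀ f : F, ∃ g ∈ G, ∀ t : Fin T, |ℓ f (zs t) - ℓ g (zs t)| ≤ ε / 16} n} Ncov) :
    -- the joint law of (blocks, signs) is the product of ∏_j μ̃ and uniform signs;
    -- a sign σ_j = ±1 is encoded by a Boolean
    (∑ p : (Fin τ' → Fin m → S) × (Fin τ' → Bool),
      ({q | (m : ℝ) * ε / 4 ≤ ⨆ f : F,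
          |(1 / (τ' : ℝ)) * ∑ j : Fin τ',
            (if q.2 j then (1 : ℝ) else -1) * ∑ t : Fin m, ℓ f (q.1 j t)|} :
        Set ((Fin τ' → Fin m → S) × (Fin τ' → Bool))).indicator
        (fun q => (∏ j, μ (q.1 j)) * (1 / 2) ^ τ') p)
      ≤ 2 * (Ncov : ℝ) * Real.exp (-(ε ^ 2 * (τ' : ℝ)) / (128 * B' ^ 2)) :=
  stmt_9_general B' hB' F ℓ hℓ0 hℓB m τ' T hm hτ hT μ hμ0 hμ1 ε hε Ncov hNcov
end
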